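/- arXiv:2405.01014 — 6 statements merged into one kernel-verified Lean document; each statement's English description precedes it below -/
import Mathlib

section
/- There exists an absolute constant C > 0 such that the following holds for all integers n ≥ 2, all N ∈ [1..n] with N dividing n, all p₁ ∈ (0,1], and every mutation operator mut satisfying that for every x ∈ {0,1}^n and every y ∈ {0,1}^n at Hamming distance 1 from x, Pr[mut(x) = y] ≥ p₁/n: the expected number of function evaluations of the MOEA/D with mutation operator mut, decomposition number N, and equidistant Chebyshev parametrization maximizing OneMinMax until its reference point satisfies z* = (n, n) is at most C·(n/p₁)·N·ln n. -/
open scoped ENNReal Classical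
open MeasureTheory

noncomputable section

/-- Bit strings of length `n`. -/
abbrev BitString (n : ℕ) : Type := Fin n → Bool

/-- The number of ones of a bit string. -/
def ones {n : ℕ} (x : BitString n) : ℕ := (Finset.univ.filter (fun i => x i = true)).card

/-- The number of zeros of a bit string. -/
def zeros {n : ℕ} (x : BitString n) : ℕ := (Finset.univ.filter (fun i => x i = false)).card

/-- Hamming distance. -/
def hamming {n : ℕ} (x y : BitString n) : ℕ := (Finset.univ.filter (fun i => x i ≠ y i)).card

/-- `mutOp` is standard bit mutation: each of the `n` bits of the parent is flipped
independently with probability `1/n`. -/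
def IsStandardBitMutation (n : ℕ) (mutOp : BitString n → PMF (BitString n)) : Prop :=
  ∀ x y : BitString n,
    mutOp x y = ENNReal.ofReal ((1 / n : ℝ) ^ hamming x y * (1 - 1 / n : ℝ) ^ (n - hamming x y))

/-- The normalization constant `C_β = ∑_{i=1}^n i^{-β}` of the power-law distribution. -/
def powC (β : ℝ) (n : ℕ) : ℝ := ∑ i ∈ Finset.Icc 1 n, (i : ℝ) ^ (-β)

/-- `mutOp` is power-law mutation with exponent `β`: a mutation strength `X ∈ [1..n]` is
sampled with `Pr[X = i] = i^{-β}/C_β`, and then a uniformly random subset of positions of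
size `X` is flipped.  Hence a string at Hamming distance `d ≥ 1` from the parent is produced
with probability `(d^{-β}/C_β) / C(n,d)`, and the parent itself with probability `0`. -/
def IsPowerLawMutation (n : ℕ) (β : ℝ) (mutOp : BitString n → PMF (BitString n)) : Prop :=
  ∀ x y : BitString n,
    mutOp x y =
      if hamming x y = 0 then 0
      else ENNReal.ofReal
        ((hamming x y : ℝ) ^ (-β) / powC β n / (n.choose (hamming x y) : ℝ))

/-- `v` weakly dominates `u` (componentwise `≥`, maximization). -/
def weakDom (v u : ℝ × ℝ) : Prop := u.1 ≤ v.1 ∧ u.2 ≤ v.2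

/-- The OneMinMax benchmark: `x ↦ (|x|₀, |x|₁)`. -/
def OMM (n : ℕ) (x : BitString n) : ℝ × ℝ := ((zeros x : ℝ), (ones x : ℝ))

/-- The state of the MOEA/D: population, reference point, archive. -/
structure MState (n N : ℕ) where
  pop : Fin (N + 1) → BitString n
  ref : ℝ × ℝ
  arch : Set (ℝ × ℝ)

/-- The Chebyshev subproblem `g_i` with equidistant weights `w_i = i/N`. -/
def gSub (n N : ℕ) (f : BitString n → ℝ × ℝ) (i : Fin (N + 1)) (x : BitString n)
    (z : ℝ × ℝ) : ℝ :=
  max (((i : ℕ) : ℝ) / N * |z.1 - (f x).1|) ((1 - ((i : ℕ) : ℝ) / N) * |z.2 - (f x).2|)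

/-- Archive update: remove all elements weakly dominated by `v`, then add `v` if it is not
weakly dominated by a remaining element. -/
def archUpdate (arch : Set (ℝ × ℝ)) (v : ℝ × ℝ) : Set (ℝ × ℝ) :=
  let A := {u ∈ arch | ¬ weakDom v u}
  if ∃ u ∈ A, weakDom u v then A else insert v A

/-- One inner step of the MOEA/D, treating subproblem `i`: mutate `x_i`, update the
reference point, conditionally replace `x_i`, and update the archive. -/
def subStep (n N : ℕ) (f : BitString n → ℝ × ℝ) (mutOp : BitString n → PMF (BitString n))
    (i : Fin (N + 1)) (s : MState n N) : PMF (MState n N) :=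
  (mutOp (s.pop i)).bind fun y =>
    PMF.pure
      (let z' : ℝ × ℝ := (max s.ref.1 (f y).1, max s.ref.2 (f y).2)
       { pop :=
           if gSub n N f i y z' ≤ gSub n N f i (s.pop i) z' then Function.update s.pop i y
           else s.pop
         ref := z'
         arch := archUpdate s.arch (f y) })

/-- One iteration of the MOEA/D: treat the subproblems `i = 0, …, N` in order. -/
def iterStep (n N : ℕ) (f : BitString n → ℝ × ℝ) (mutOp : BitString n → PMF (BitString n))
    (s : MState n N) : PMF (MState n N) :=
  (List.finRange (N + 1)).foldl (fun p i => p.bind (subStep n N f mutOp i)) (PMF.pure s)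

/-- The initial state built from a sampled population: the reference point is the
componentwise maximum of the objective values, and the archive is the set of
non-dominated objective values of the population. -/
def initState (n N : ℕ) (f : BitString n → ℝ × ℝ) (pop : Fin (N + 1) → BitString n) :
    MState n N where
  pop := pop
  ref := (⨆ i, (f (pop i)).1, ⨆ i, (f (pop i)).2)
  arch := {v | (∃ i, f (pop i) = v) ∧ ∀ j, ¬ (weakDom (f (pop j)) v ∧ f (pop j) ≠ v)}

/-- The distribution of the initial state: the population is sampled uniformly at random. -/
def initPMF (n N : ℕ) (f : BitString n → ℝ × ℝ) : PMF (MState n N) :=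
  (PMF.uniformOfFintype (Fin (N + 1) → BitString n)).map (initState n N f)

/-- Joint law of `(current state, list of all states so far)` after `t` iterations. -/
def histPMF {S : Type*} (init : PMF S) (step : S → PMF S) : ℕ → PMF (S × List S)
  | 0 => init.map fun s => (s, [s])
  | t + 1 => (histPMF init step t).bind fun p => (step p.1).map fun s' => (s', s' :: p.2)

/-- `Pr[T > t]`: the probability that none of the states after `0, 1, …, t` iterations
satisfies `done`, where `T` is the first iteration after which `done` holds. -/
def survivalProb {S : Type*} (init : PMF S) (step : S → PMF S) (done : S → Prop) (t : ℕ) :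
    ℝ≥0∞ :=
  (histPMF init step t).toOuterMeasure {p | ∀ s ∈ p.2, ¬ done s}

/-- The expected number of function evaluations of the MOEA/D on `f` until `done` first
holds: `N + 1` evaluations at initialization and `N + 1` per iteration, i.e.
`(N+1) · (1 + E[T]) = (N+1) · (1 + ∑_t Pr[T > t])`. -/
def expectedEvals (n N : ℕ) (f : BitString n → ℝ × ℝ) (mutOp : BitString n → PMF (BitString n))
    (done : MState n N → Prop) : ℝ≥0∞ :=
  ((N : ℝ≥0∞) + 1) * (1 + ∑' t, survivalProb (initPMF n N f) (iterStep n N f mutOp) done t)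

/-- The Pareto front of OneMinMax: `{(i, n-i) : 0 ≤ i ≤ n}`. -/
def paretoFrontOMM (n : ℕ) : Set (ℝ × ℝ) :=
  {v | ∃ i : ℕ, i ≤ n ∧ v = ((i : ℝ), (n : ℝ) - (i : ℝ))}

/-!
The extreme subproblems `g_N` and `g_0` only see the number of zeros of `x_N` and the number
of ones of `x_0`. While `z*` dominates these counts, which it does from the start, such a
subproblem accepts an offspring exactly when the count does not drop, so the gaps
`n - |x_N|₀` and `n - |x_0|₁` never grow, and a gap `d` shrinks with probability at least
`d · p₁/n` per iteration through one of its `d` improving one-bit flips. So the expected total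
gap, which bounds `Pr[z* ≠ (n, n)]`, contracts by `1 - p₁/n` per iteration; summing the
resulting tail `min(1, 2n(1 - p₁/n)^t)` gives `O((n/p₁) log n)` iterations of `N + 1`
evaluations each.
-/

namespace PMF

variable {α β ι : Type*}

def expect (p : PMF α) (g : α → ℝ≥0∞) : ℝ≥0∞ := ∑' a, p a * g a

theorem expect_pure (a : α) (g : α → ℝ≥0∞) : (PMF.pure a).expect g = g a := by
  simp [expect, pure_apply]

theorem expect_bind (p : PMF α) (k : α → PMF β) (g : β → ℝ≥0∞) :
    (p.bind k).expect g = p.expect fun a => (k a).expect g := by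
  simp only [expect, bind_apply, ← ENNReal.tsum_mul_right, ← ENNReal.tsum_mul_left, mul_assoc]
  exact ENNReal.tsum_comm

theorem expect_map (p : PMF α) (f : α → β) (g : β → ℝ≥0∞) :
    (p.map f).expect g = p.expect (g ∘ f) := by
  simp only [map, expect_bind, Function.comp_apply, expect_pure]
  rfl

theorem expect_add (p : PMF α) (g h : α → ℝ≥0∞) :
    p.expect (fun a => g a + h a) = p.expect g + p.expect h := by
  simp only [expect, mul_add, ENNReal.tsum_add]

theorem expect_const_mul (p : PMF α) (r : ℝ≥0∞) (g : α → ℝ≥0∞) :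
    p.expect (fun a => r * g a) = r * p.expect g := by
  simp only [expect, mul_left_comm, ENNReal.tsum_mul_left]

theorem expect_const (p : PMF α) (c : ℝ≥0∞) : p.expect (fun _ => c) = c := by
  simp only [expect, ENNReal.tsum_mul_right, tsum_coe, one_mul]

theorem expect_mono {p : PMF α} {g h : α → ℝ≥0∞} (hgh : ∀ a ∈ p.support, g a ≤ h a) :
    p.expect g ≤ p.expect h := by
  refine ENNReal.tsum_le_tsum fun a => ?_
  by_cases ha : a ∈ p.support
  · gcongr
    exact hgh a ha
  · simp [(mem_support_iff p a).not_left.mp ha]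

theorem expect_le_of_le {p : PMF α} {g : α → ℝ≥0∞} {c : ℝ≥0∞} (hg : ∀ a, g a ≤ c) :
    p.expect g ≤ c :=
  (expect_mono fun a _ => hg a).trans_eq (expect_const p c)

theorem toOuterMeasure_le_expect {p : PMF α} {s : Set α} {g : α → ℝ≥0∞}
    (hg : ∀ a ∈ p.support, a ∈ s → 1 ≤ g a) : p.toOuterMeasure s ≤ p.expect g := by
  rw [toOuterMeasure_apply, expect]
  refine ENNReal.tsum_le_tsum fun a => ?_
  by_cases ha : a ∈ p.support
  · by_cases has : a ∈ s
    · simpa [Set.indicator_of_mem has] using mul_le_mul_right (hg a ha has) (p a)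
    · simp [Set.indicator_of_notMem has]
  · simp [(mem_support_iff p a).not_left.mp ha]

theorem toOuterMeasure_le_one (p : PMF α) (s : Set α) : p.toOuterMeasure s ≤ 1 :=
  (toOuterMeasure_le_expect (g := fun _ => 1) fun _ _ _ => le_rfl).trans_eq (expect_const p 1)

/-- A truncated potential `m - max k φ` with `φ ≤ m` loses at least one unit on the event
`k < φ`, so a lower bound on that event's probability yields multiplicative drift. -/
theorem expect_sub_max_le {p : PMF α} {φ : α → ℕ} {k m : ℕ} {c : ℝ≥0∞} (hφ : ∀ a, φ a ≤ m)
    (hc : (m - k : ℕ) * c ≤ p.toOuterMeasure {a | k < φ a}) :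
    p.expect (fun a => ((m - max k (φ a) : ℕ) : ℝ≥0∞)) ≤ (1 - c) * (m - k : ℕ) := by
  have hsum : p.expect (fun a => ((m - max k (φ a) : ℕ) : ℝ≥0∞)) + p.toOuterMeasure {a | k < φ a}
      ≤ (m - k : ℕ) := by
    rw [toOuterMeasure_apply, expect, ← ENNReal.tsum_add, ← expect_const p ((m - k : ℕ) : ℝ≥0∞),
      expect]
    refine ENNReal.tsum_le_tsum fun a => ?_
    by_cases hka : k < φ a
    · rw [Set.indicator_of_mem (show a ∈ {a | k < φ a} from hka), ← mul_add_one]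
      gcongr
      exact_mod_cast (show m - max k (φ a) + 1 ≤ m - k by have := hφ a; omega)
    · rw [Set.indicator_of_notMem (show a ∉ {a | k < φ a} from hka), add_zero]
      gcongr
      omega
  rw [ENNReal.sub_mul fun _ _ => ENNReal.natCast_ne_top _, one_mul, mul_comm c]
  exact ENNReal.le_sub_of_add_le_right
    (ne_top_of_le_ne_top ENNReal.one_ne_top (hc.trans (toOuterMeasure_le_one p _)))
    ((add_le_add_right hc _).trans hsum)

/-- The kernel `k` never leaves the set of states satisfying `I`. -/
def Preserves (I : α → Prop) (k : α → PMF α) : Prop := ∀ a, I a → ∀ b ∈ (k a).support, I b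

theorem Preserves.and {I J : α → Prop} {k : α → PMF α} (hI : Preserves I k)
    (hJ : Preserves J k) : Preserves (fun a => I a ∧ J a) k :=
  fun a ha b hb => ⟨hI a ha.1 b hb, hJ a ha.2 b hb⟩

theorem support_bind_of_preserves {I : α → Prop} {p : PMF α} {k : α → PMF α}
    (hp : ∀ a ∈ p.support, I a) (hk : Preserves I k) : ∀ b ∈ (p.bind k).support, I b := by
  intro b hb
  obtain ⟨a, ha, hab⟩ := (mem_support_bind_iff p k b).mp hb
  exact hk a (hp a ha) b hab

theorem expect_bind_le {p : PMF α} {k : α → PMF α} {g : α → ℝ≥0∞} {r : ℝ≥0∞}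
    (hk : ∀ a ∈ p.support, (k a).expect g ≤ r * g a) :
    (p.bind k).expect g ≤ r * p.expect g := by
  rw [expect_bind, ← expect_const_mul]
  exact expect_mono hk

theorem support_foldl_bind {I : α → Prop} {k : ι → α → PMF α} (hk : ∀ i, Preserves I (k i))
    (L : List ι) {p : PMF α} (hp : ∀ a ∈ p.support, I a) :
    ∀ b ∈ (L.foldl (fun q i => q.bind (k i)) p).support, I b := by
  induction L generalizing p with
  | nil => exact hp
  | cons i L ih => exact ih (support_bind_of_preserves hp (hk i))

theorem expect_foldl_bind_le {I : α → Prop} {k : ι → α → PMF α} {g : α → ℝ≥0∞}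
    {κ : ι → ℝ≥0∞} (hk : ∀ i, Preserves I (k i))
    (hd : ∀ i a, I a → (k i a).expect g ≤ κ i * g a) (L : List ι) {p : PMF α}
    (hp : ∀ a ∈ p.support, I a) :
    (L.foldl (fun q i => q.bind (k i)) p).expect g ≤ (L.map κ).prod * p.expect g := by
  induction L generalizing p with
  | nil => simp
  | cons i L ih =>
    calc _ ≤ (L.map κ).prod * (p.bind (k i)).expect g :=
          ih (support_bind_of_preserves hp (hk i))
      _ ≤ (L.map κ).prod * (κ i * p.expect g) := by
          gcongr
          exact expect_bind_le fun a ha => hd i a (hp a ha)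
      _ = ((i :: L).map κ).prod * p.expect g := by
          rw [List.map_cons, List.prod_cons]
          ring

end PMF

section MarkovChain

open PMF

variable {S : Type*} {init : PMF S} {step : S → PMF S} {I : S → Prop}

theorem fst_mem_snd_of_mem_support_histPMF (t : ℕ) :
    ∀ q ∈ (histPMF init step t).support, q.1 ∈ q.2 := by
  cases t with
  | zero =>
    simp only [histPMF, support_map, Set.mem_image]
    rintro _ ⟨s, -, rfl⟩
    exact List.mem_singleton_self s
  | succ t =>
    simp only [histPMF, mem_support_bind_iff, support_map, Set.mem_image]
    rintro _ ⟨q, -, s, -, rfl⟩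
    exact List.mem_cons_self

theorem support_histPMF (h₀ : ∀ s ∈ init.support, I s) (hstep : Preserves I step) (t : ℕ) :
    ∀ q ∈ (histPMF init step t).support, I q.1 := by
  induction t with
  | zero =>
    simp only [histPMF, support_map, Set.mem_image]
    rintro _ ⟨s, hs, rfl⟩
    exact h₀ s hs
  | succ t ih =>
    simp only [histPMF, mem_support_bind_iff, support_map, Set.mem_image]
    rintro _ ⟨q, hq, s, hs, rfl⟩
    exact hstep q.1 (ih q hq) s hs

theorem expect_histPMF_le {g : S → ℝ≥0∞} {r : ℝ≥0∞} (h₀ : ∀ s ∈ init.support, I s)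
    (hstep : Preserves I step) (hd : ∀ s, I s → (step s).expect g ≤ r * g s) (t : ℕ) :
    (histPMF init step t).expect (fun q => g q.1) ≤ r ^ t * init.expect g := by
  induction t with
  | zero => simp [histPMF, expect_map, Function.comp_def]
  | succ t ih =>
    calc (histPMF init step (t + 1)).expect (fun q => g q.1)
        = (histPMF init step t).expect (fun q => (step q.1).expect g) := by
          simp only [histPMF, expect_bind, expect_map, Function.comp_def]
      _ ≤ (histPMF init step t).expect (fun q => r * g q.1) :=
          expect_mono fun q hq => hd q.1 (support_histPMF h₀ hstep t q hq)
      _ ≤ r ^ (t + 1) * init.expect g := by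
          rw [expect_const_mul, pow_succ', mul_assoc]
          gcongr

/-- Multiplicative drift: a potential that is at least `1` off the target and contracts by
`r` per step bounds the survival probability geometrically. -/
theorem survivalProb_le_pow_mul_expect {done : S → Prop} {g : S → ℝ≥0∞} {r : ℝ≥0∞}
    (h₀ : ∀ s ∈ init.support, I s) (hstep : Preserves I step)
    (hd : ∀ s, I s → (step s).expect g ≤ r * g s) (hdone : ∀ s, I s → ¬ done s → 1 ≤ g s)
    (t : ℕ) : survivalProb init step done t ≤ r ^ t * init.expect g := by
  refine le_trans ?_ (expect_histPMF_le h₀ hstep hd t)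
  refine toOuterMeasure_le_expect fun q hq hnd => ?_
  exact hdone q.1 (support_histPMF h₀ hstep t q hq)
    (hnd q.1 (fst_mem_snd_of_mem_support_histPMF t q hq))

theorem survivalProb_le_one (done : S → Prop) (t : ℕ) :
    survivalProb init step done t ≤ 1 :=
  toOuterMeasure_le_one _ _

end MarkovChain

namespace ENNReal

theorem tsum_le_of_le_one_of_le_mul_pow {f : ℕ → ℝ≥0∞} {a r : ℝ≥0∞} (h₁ : ∀ t, f t ≤ 1)
    (hgeom : ∀ t, f t ≤ a * r ^ t) (t₀ : ℕ) :
    ∑' t, f t ≤ t₀ + a * r ^ t₀ * (1 - r)⁻¹ := by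
  rw [← (ENNReal.summable (f := fun t => f (t + t₀))).sum_add_tsum_nat_add']
  gcongr
  · calc ∑ i ∈ Finset.range t₀, f i ≤ ∑ _i ∈ Finset.range t₀, (1 : ℝ≥0∞) :=
          Finset.sum_le_sum fun i _ => h₁ i
      _ = t₀ := by simp
  · calc ∑' t, f (t + t₀) ≤ ∑' t, a * r ^ t₀ * r ^ t :=
          ENNReal.tsum_le_tsum fun t => (hgeom (t + t₀)).trans_eq (by ring)
      _ = a * r ^ t₀ * (1 - r)⁻¹ := by rw [ENNReal.tsum_mul_left, ENNReal.tsum_geometric]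

theorem one_sub_ofReal_pow_le {q : ℝ} (hq₀ : 0 ≤ q) (hq₁ : q ≤ 1) (t : ℕ) :
    (1 - ENNReal.ofReal q) ^ t ≤ ENNReal.ofReal (Real.exp (-(q * t))) := by
  rw [← ENNReal.ofReal_one, ← ENNReal.ofReal_sub _ hq₀, ← ENNReal.ofReal_pow (by linarith)]
  refine ENNReal.ofReal_le_ofReal ?_
  calc (1 - q) ^ t ≤ Real.exp (-q) ^ t :=
        pow_le_pow_left₀ (by linarith) (by linarith [Real.add_one_le_exp (-q)]) t
    _ = Real.exp (-(q * t)) := by rw [← Real.exp_nat_mul]; ring_nf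

/-- With `t₀ = ⌈log A / q⌉` the geometric tail after `t₀` contributes at most `1 / q`. -/
theorem tsum_le_of_le_one_of_le_mul_one_sub_pow {f : ℕ → ℝ≥0∞} {A q : ℝ} (hA : 1 ≤ A)
    (hq₀ : 0 < q) (hq₁ : q ≤ 1) (h₁ : ∀ t, f t ≤ 1)
    (hgeom : ∀ t, f t ≤ ENNReal.ofReal A * (1 - ENNReal.ofReal q) ^ t) :
    ∑' t, f t ≤ ENNReal.ofReal ((Real.log A + 1) / q + 1) := by
  set t₀ := ⌈Real.log A / q⌉₊
  have hlog : 0 ≤ Real.log A / q := div_nonneg (Real.log_nonneg hA) hq₀.le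
  have ht₀ : (t₀ : ℝ≥0∞) ≤ ENNReal.ofReal (Real.log A / q + 1) := by
    rw [← ENNReal.ofReal_natCast]
    exact ENNReal.ofReal_le_ofReal (Nat.ceil_lt_add_one hlog).le
  have hdecay : A * Real.exp (-(q * t₀)) ≤ 1 := by
    have : Real.log A ≤ q * t₀ := by
      rw [← div_le_iff₀' hq₀]
      exact Nat.le_ceil _
    calc A * Real.exp (-(q * t₀)) ≤ A * Real.exp (-Real.log A) := by gcongr
      _ = 1 := by rw [Real.exp_neg, Real.exp_log (by linarith), mul_inv_cancel₀ (by linarith)]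
  have hinv : (1 - (1 - ENNReal.ofReal q))⁻¹ = ENNReal.ofReal (1 / q) := by
    rw [ENNReal.sub_sub_cancel ENNReal.one_ne_top (ENNReal.ofReal_le_one.mpr hq₁),
      ← ENNReal.ofReal_inv_of_pos hq₀, one_div]
  have htail : ENNReal.ofReal A * (1 - ENNReal.ofReal q) ^ t₀ * (1 - (1 - ENNReal.ofReal q))⁻¹
      ≤ ENNReal.ofReal (1 / q) := by
    calc _ ≤ ENNReal.ofReal A * ENNReal.ofReal (Real.exp (-(q * t₀))) * ENNReal.ofReal (1 / q) := by
          rw [hinv]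
          gcongr
          exact one_sub_ofReal_pow_le hq₀.le hq₁ t₀
      _ ≤ 1 * ENNReal.ofReal (1 / q) := by
          rw [← ENNReal.ofReal_mul (by linarith)]
          gcongr
          exact ENNReal.ofReal_le_one.mpr hdecay
      _ = _ := one_mul _
  calc ∑' t, f t ≤ t₀ + ENNReal.ofReal A * (1 - ENNReal.ofReal q) ^ t₀
        * (1 - (1 - ENNReal.ofReal q))⁻¹ := tsum_le_of_le_one_of_le_mul_pow h₁ hgeom t₀
    _ ≤ ENNReal.ofReal (Real.log A / q + 1) + ENNReal.ofReal (1 / q) := add_le_add ht₀ htail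
    _ = ENNReal.ofReal ((Real.log A + 1) / q + 1) := by
        rw [← ENNReal.ofReal_add (by positivity) (by positivity)]
        congr 1
        ring

theorem natCast_add_one_mul_one_add_le (N : ℕ) {S : ℝ≥0∞} {B : ℝ} (hB : 0 ≤ B)
    (hS : S ≤ ENNReal.ofReal B) :
    ((N : ℝ≥0∞) + 1) * (1 + S) ≤ ENNReal.ofReal ((N + 1) * (1 + B)) := by
  rw [ENNReal.ofReal_mul (by positivity), ENNReal.ofReal_add (Nat.cast_nonneg N) zero_le_one,
    ENNReal.ofReal_add zero_le_one hB, ENNReal.ofReal_natCast, ENNReal.ofReal_one]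
  gcongr

end ENNReal

theorem add_one_mul_two_add_log_mul_le {n N u : ℝ} (hn : 2 ≤ n) (hN : 1 ≤ N) (hu : 2 ≤ u) :
    (N + 1) * (1 + ((Real.log (2 * n) + 1) * u + 1)) ≤ 12 * u * N * Real.log n := by
  have hlog2 : 0.6931 ≤ Real.log 2 := by linarith [Real.log_two_gt_d9]
  have hlogn : Real.log 2 ≤ Real.log n := Real.log_le_log (by norm_num) hn
  have hsplit : Real.log (2 * n) = Real.log 2 + Real.log n :=
    Real.log_mul (by norm_num) (by linarith)
  have huL : 1.38 ≤ u * Real.log n := by nlinarith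
  have hinner : 1 + ((Real.log (2 * n) + 1) * u + 1) ≤ 6 * (u * Real.log n) := by
    rw [hsplit]; nlinarith
  calc (N + 1) * (1 + ((Real.log (2 * n) + 1) * u + 1)) ≤ (2 * N) * (6 * (u * Real.log n)) :=
        mul_le_mul (by linarith) hinner (by rw [hsplit]; nlinarith) (by positivity)
    _ = 12 * u * N * Real.log n := by ring

theorem List.prod_map_finRange_ite_eq {M : Type*} [CommMonoid M] {m : ℕ} (j : Fin m) (r : M) :
    ((List.finRange m).map fun i => if i = j then r else 1).prod = r := by
  rw [← Fin.prod_univ_def, Finset.prod_ite_eq' Finset.univ j fun _ => r,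
    if_pos (Finset.mem_univ j)]

theorem abs_max_sub_le_abs_max_sub_iff {a b z : ℝ} (ha : a ≤ z) :
    |max z b - b| ≤ |max z b - a| ↔ a ≤ b := by
  rw [abs_of_nonneg (sub_nonneg.mpr (le_max_right z b)),
    abs_of_nonneg (sub_nonneg.mpr (ha.trans (le_max_left z b))), sub_le_sub_iff_left]


namespace MoeadOMM

open Finset

variable {n N : ℕ}

def bitCount (b : Bool) (x : BitString n) : ℕ := #{i | x i = b}

theorem zeros_eq_bitCount (x : BitString n) : zeros x = bitCount false x := rfl

theorem ones_eq_bitCount (x : BitString n) : ones x = bitCount true x := rfl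

theorem bitCount_le (b : Bool) (x : BitString n) : bitCount b x ≤ n :=
  (card_filter_le _ _).trans_eq (card_fin n)

theorem card_filter_ne (b : Bool) (x : BitString n) : #{i | x i ≠ b} = n - bitCount b x := by
  have h := card_filter_add_card_filter_not (s := univ) (fun i => x i = b)
  rw [card_univ, Fintype.card_fin] at h
  simp only [bitCount, ne_eq]
  omega

theorem bitCount_update {b : Bool} {x : BitString n} {j : Fin n} (hj : x j ≠ b) :
    bitCount b (Function.update x j b) = bitCount b x + 1 := by
  have : univ.filter (fun i => Function.update x j b i = b)
      = insert j (univ.filter fun i => x i = b) := by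
    ext i
    by_cases hij : i = j
    · subst hij; simp
    · simp [hij]
  rw [bitCount, this, card_insert_of_notMem (by simpa using hj), bitCount]

theorem hamming_update {b : Bool} {x : BitString n} {j : Fin n} (hj : x j ≠ b) :
    hamming x (Function.update x j b) = 1 := by
  have : univ.filter (fun i => x i ≠ Function.update x j b i) = {j} := by
    ext i
    by_cases hij : i = j
    · subst hij; simp [hj]
    · simp [hij]
  rw [hamming, this, card_singleton]

/-- The Hamming neighbours of `x` with one more `b`-bit. -/
def improvingNeighbours (b : Bool) (x : BitString n) : Finset (BitString n) :=
  ({i | x i ≠ b} : Finset (Fin n)).image fun j => Function.update x j b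

theorem card_improvingNeighbours (b : Bool) (x : BitString n) :
    #(improvingNeighbours b x) = n - bitCount b x := by
  rw [improvingNeighbours, card_image_of_injOn, card_filter_ne]
  intro j hj j' _ hjj'
  by_contra hne
  have := congrFun hjj' j
  simp only [Function.update_self, Function.update_of_ne hne] at this
  exact (mem_filter.mp (mem_coe.mp hj)).2 this.symm

theorem mem_improvingNeighbours {b : Bool} {x y : BitString n}
    (hy : y ∈ improvingNeighbours b x) :
    hamming x y = 1 ∧ bitCount b y = bitCount b x + 1 := by
  obtain ⟨j, hj, rfl⟩ := mem_image.mp hy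
  have hj : x j ≠ b := (mem_filter.mp hj).2
  exact ⟨hamming_update hj, bitCount_update hj⟩

theorem mul_le_prob_bitCount_lt {c : ℝ≥0∞} {mutOp : BitString n → PMF (BitString n)}
    (hmut : ∀ x y : BitString n, hamming x y = 1 → c ≤ mutOp x y) (b : Bool)
    (x : BitString n) :
    (n - bitCount b x : ℕ) * c ≤ (mutOp x).toOuterMeasure {y | bitCount b x < bitCount b y} :=
  calc (n - bitCount b x : ℕ) * c = ∑ _y ∈ improvingNeighbours b x, c := by
        rw [sum_const, card_improvingNeighbours, nsmul_eq_mul]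
    _ ≤ ∑ y ∈ improvingNeighbours b x, mutOp x y :=
        sum_le_sum fun y hy => hmut x y (mem_improvingNeighbours hy).1
    _ = (mutOp x).toOuterMeasure (improvingNeighbours b x) :=
        (PMF.toOuterMeasure_apply_finset _ _).symm
    _ ≤ (mutOp x).toOuterMeasure {y | bitCount b x < bitCount b y} := by
        refine measure_mono fun y hy => ?_
        simp [(mem_improvingNeighbours hy).2]

theorem expect_sub_max_bitCount_le {c : ℝ≥0∞} {mutOp : BitString n → PMF (BitString n)}
    (hmut : ∀ x y : BitString n, hamming x y = 1 → c ≤ mutOp x y) (b : Bool)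
    (x : BitString n) :
    (mutOp x).expect (fun y => ((n - max (bitCount b x) (bitCount b y) : ℕ) : ℝ≥0∞))
      ≤ (1 - c) * (n - bitCount b x : ℕ) :=
  PMF.expect_sub_max_le (bitCount_le b) (mul_le_prob_bitCount_lt hmut b x)

/-- The objective of OneMinMax that counts `b`-bits: zeros are the first coordinate,
ones the second. -/
def coord (b : Bool) (z : ℝ × ℝ) : ℝ := bif b then z.2 else z.1

theorem coord_OMM (b : Bool) (x : BitString n) : coord b (OMM n x) = bitCount b x := by
  cases b <;> rfl

def refUpdate (z v : ℝ × ℝ) : ℝ × ℝ := (max z.1 v.1, max z.2 v.2)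

theorem coord_refUpdate (b : Bool) (z v : ℝ × ℝ) :
    coord b (refUpdate z v) = max (coord b z) (coord b v) := by
  cases b <;> rfl

def stateAfter (f : BitString n → ℝ × ℝ) (i : Fin (N + 1)) (s : MState n N) (y : BitString n) :
    MState n N where
  pop := if gSub n N f i y (refUpdate s.ref (f y)) ≤ gSub n N f i (s.pop i) (refUpdate s.ref (f y))
    then Function.update s.pop i y else s.pop
  ref := refUpdate s.ref (f y)
  arch := archUpdate s.arch (f y)

theorem subStep_eq_map (f : BitString n → ℝ × ℝ) (mutOp : BitString n → PMF (BitString n))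
    (i : Fin (N + 1)) (s : MState n N) :
    subStep n N f mutOp i s = (mutOp (s.pop i)).map (stateAfter f i s) := rfl

theorem coord_ref_stateAfter (b : Bool) (i : Fin (N + 1)) (s : MState n N) (y : BitString n) :
    coord b (stateAfter (OMM n) i s y).ref = max (coord b s.ref) (bitCount b y) := by
  rw [stateAfter, coord_refUpdate, coord_OMM]

/-- On OneMinMax, subproblem `j` is the single-objective problem of maximizing the number
of `b`-bits. -/
def IsExtremeSubproblem (n N : ℕ) (j : Fin (N + 1)) (b : Bool) : Prop :=
  ∀ x z, gSub n N (OMM n) j x z = |coord b z - bitCount b x|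

theorem isExtremeSubproblem_last (hN : N ≠ 0) :
    IsExtremeSubproblem n N (Fin.last N) false := by
  intro x z
  have hN' : (N : ℝ) ≠ 0 := Nat.cast_ne_zero.mpr hN
  simp [gSub, OMM, coord, zeros_eq_bitCount, div_self hN']

theorem isExtremeSubproblem_zero : IsExtremeSubproblem n N 0 true := by
  intro x z
  simp [gSub, OMM, coord, ones_eq_bitCount]

def RefBound (j : Fin (N + 1)) (b : Bool) (s : MState n N) : Prop :=
  (bitCount b (s.pop j) : ℝ) ≤ coord b s.ref ∧ coord b s.ref ≤ n

def gap (j : Fin (N + 1)) (b : Bool) (s : MState n N) : ℕ := n - bitCount b (s.pop j)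

theorem refBound_initState (j : Fin (N + 1)) (b : Bool) (pop : Fin (N + 1) → BitString n) :
    RefBound j b (initState n N (OMM n) pop) := by
  have href : coord b (initState n N (OMM n) pop).ref = ⨆ i, coord b (OMM n (pop i)) := by
    cases b <;> rfl
  rw [RefBound, href]
  constructor
  · rw [← coord_OMM]
    exact le_ciSup (Set.finite_range fun i => coord b (OMM n (pop i))).bddAbove j
  · refine ciSup_le fun i => ?_
    rw [coord_OMM]
    exact_mod_cast bitCount_le b (pop i)

theorem coord_ref_eq_of_gap_eq_zero {j : Fin (N + 1)} {b : Bool} {s : MState n N}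
    (hs : RefBound j b s) (hgap : gap j b s = 0) : coord b s.ref = n := by
  have hcount : bitCount b (s.pop j) = n := by
    have := bitCount_le b (s.pop j)
    rw [gap] at hgap
    omega
  have := hs.1
  rw [hcount] at this
  exact le_antisymm hs.2 this

namespace IsExtremeSubproblem

variable {j : Fin (N + 1)} {b : Bool} {c : ℝ≥0∞} {mutOp : BitString n → PMF (BitString n)}

theorem bitCount_pop_stateAfter (hE : IsExtremeSubproblem n N j b) {s : MState n N}
    (hs : RefBound j b s) (i : Fin (N + 1)) (y : BitString n) :
    bitCount b ((stateAfter (OMM n) i s y).pop j) =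
      if i = j then max (bitCount b (s.pop j)) (bitCount b y) else bitCount b (s.pop j) := by
  by_cases hij : i = j
  · subst hij
    have hacc : gSub n N (OMM n) i y (refUpdate s.ref (OMM n y))
          ≤ gSub n N (OMM n) i (s.pop i) (refUpdate s.ref (OMM n y))
        ↔ bitCount b (s.pop i) ≤ bitCount b y := by
      rw [hE, hE, coord_refUpdate, coord_OMM, abs_max_sub_le_abs_max_sub_iff hs.1, Nat.cast_le]
    simp only [stateAfter, if_true]
    split_ifs with h
    · rw [Function.update_self, max_eq_right (hacc.mp h)]
    · rw [max_eq_left (le_of_not_ge (mt hacc.mpr h))]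
  · simp only [stateAfter, if_neg hij]
    split_ifs
    · rw [Function.update_of_ne (Ne.symm hij)]
    · rfl

theorem refBound_stateAfter (hE : IsExtremeSubproblem n N j b) {s : MState n N}
    (hs : RefBound j b s) (i : Fin (N + 1)) (y : BitString n) :
    RefBound j b (stateAfter (OMM n) i s y) := by
  rw [RefBound, coord_ref_stateAfter, hE.bitCount_pop_stateAfter hs]
  refine ⟨?_, max_le hs.2 (by exact_mod_cast bitCount_le b y)⟩
  split_ifs
  · push_cast
    exact max_le_max hs.1 le_rfl
  · exact hs.1.trans (le_max_left _ _)

theorem preserves_subStep (hE : IsExtremeSubproblem n N j b) (i : Fin (N + 1)) :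
    PMF.Preserves (RefBound j b) (subStep n N (OMM n) mutOp i) := by
  intro s hs s' hs'
  rw [subStep_eq_map, PMF.support_map] at hs'
  obtain ⟨y, -, rfl⟩ := hs'
  exact hE.refBound_stateAfter hs i y

theorem expect_gap_subStep_le (hE : IsExtremeSubproblem n N j b)
    (hmut : ∀ x y : BitString n, hamming x y = 1 → c ≤ mutOp x y) (i : Fin (N + 1))
    {s : MState n N} (hs : RefBound j b s) :
    (subStep n N (OMM n) mutOp i s).expect (fun s' => (gap j b s' : ℝ≥0∞))
      ≤ (if i = j then 1 - c else 1) * gap j b s := by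
  rw [subStep_eq_map, PMF.expect_map]
  by_cases hij : i = j
  · subst hij
    simp only [Function.comp_def, gap, hE.bitCount_pop_stateAfter hs, if_true]
    exact expect_sub_max_bitCount_le hmut b (s.pop i)
  · simp only [Function.comp_def, gap, hE.bitCount_pop_stateAfter hs, if_neg hij,
      PMF.expect_const, one_mul, le_rfl]

theorem preserves_iterStep (hE : IsExtremeSubproblem n N j b) :
    PMF.Preserves (RefBound j b) (iterStep n N (OMM n) mutOp) := fun s hs =>
  PMF.support_foldl_bind (fun i => hE.preserves_subStep i) _
    (by simpa [PMF.support_pure] using hs)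

theorem expect_gap_iterStep_le (hE : IsExtremeSubproblem n N j b)
    (hmut : ∀ x y : BitString n, hamming x y = 1 → c ≤ mutOp x y) {s : MState n N}
    (hs : RefBound j b s) :
    (iterStep n N (OMM n) mutOp s).expect (fun s' => (gap j b s' : ℝ≥0∞))
      ≤ (1 - c) * gap j b s := by
  have h := PMF.expect_foldl_bind_le (fun i => hE.preserves_subStep i)
    (fun i s hs => hE.expect_gap_subStep_le hmut i hs) (List.finRange (N + 1))
    (p := PMF.pure s) (by simpa [PMF.support_pure] using hs)
  rwa [PMF.expect_pure, List.prod_map_finRange_ite_eq] at h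

end IsExtremeSubproblem

def RefBounds (s : MState n N) : Prop := RefBound (Fin.last N) false s ∧ RefBound 0 true s

def gapSum (s : MState n N) : ℕ := gap (Fin.last N) false s + gap 0 true s

theorem ref_eq_of_gapSum_eq_zero {s : MState n N} (hs : RefBounds s) (h : gapSum s = 0) :
    s.ref = ((n : ℝ), (n : ℝ)) := by
  rw [gapSum] at h
  exact Prod.ext (coord_ref_eq_of_gap_eq_zero hs.1 (by omega))
    (coord_ref_eq_of_gap_eq_zero hs.2 (by omega))

theorem survivalProb_le {c : ℝ≥0∞} {mutOp : BitString n → PMF (BitString n)} (hN : N ≠ 0)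
    (hmut : ∀ x y : BitString n, hamming x y = 1 → c ≤ mutOp x y) (t : ℕ) :
    survivalProb (initPMF n N (OMM n)) (iterStep n N (OMM n) mutOp)
        (fun s => s.ref = ((n : ℝ), (n : ℝ))) t
      ≤ ENNReal.ofReal (2 * n) * (1 - c) ^ t := by
  have hlast := isExtremeSubproblem_last (n := n) hN
  have hzero := isExtremeSubproblem_zero (n := n) (N := N)
  have hinit : (initPMF n N (OMM n)).expect (fun s => (gapSum s : ℝ≥0∞))
      ≤ ENNReal.ofReal (2 * n) := by
    refine PMF.expect_le_of_le fun s => ?_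
    rw [ENNReal.ofReal_mul zero_le_two, ENNReal.ofReal_ofNat, ENNReal.ofReal_natCast]
    exact_mod_cast (show gapSum s ≤ 2 * n by simp only [gapSum, gap]; omega)
  refine (survivalProb_le_pow_mul_expect (I := RefBounds) (g := fun s => (gapSum s : ℝ≥0∞))
    (r := 1 - c) ?_
    (hlast.preserves_iterStep.and hzero.preserves_iterStep) ?_ ?_ t).trans ?_
  · rw [initPMF, PMF.support_map]
    rintro _ ⟨pop, -, rfl⟩
    exact ⟨refBound_initState _ _ pop, refBound_initState _ _ pop⟩
  · intro s hs
    simp only [gapSum, Nat.cast_add]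
    rw [PMF.expect_add, mul_add]
    exact add_le_add (hlast.expect_gap_iterStep_le hmut hs.1)
      (hzero.expect_gap_iterStep_le hmut hs.2)
  · intro s hs hnd
    exact Nat.one_le_cast.mpr (Nat.pos_of_ne_zero fun h => hnd (ref_eq_of_gapSum_eq_zero hs h))
  · rw [mul_comm]
    gcongr

end MoeadOMM

/-- For any mutation operator that produces each Hamming neighbor of the
parent with probability at least `p₁/n`, the expected number of function evaluations of
the MOEA/D maximizing OneMinMax until the reference point satisfies `z* = (n, n)` is at
most `C·(n/p₁)·N·ln n` for an absolute constant `C`. -/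
theorem moead_omm_reference_point :
    ∃ C : ℝ, 0 < C ∧
      ∀ n N : ℕ, 2 ≤ n → 1 ≤ N → N ≤ n → N ∣ n →
        ∀ p₁ : ℝ, 0 < p₁ → p₁ ≤ 1 →
          ∀ mutOp : BitString n → PMF (BitString n),
            (∀ x y : BitString n, hamming x y = 1 → ENNReal.ofReal (p₁ / n) ≤ mutOp x y) →
            expectedEvals n N (OMM n) mutOp (fun s => s.ref = ((n : ℝ), (n : ℝ)))
              ≤ ENNReal.ofReal (C * ((n : ℝ) / p₁) * N * Real.log n) := by
  refine ⟨12, by norm_num, fun n N hn hN _ _ p₁ hp₀ hp₁ mutOp hmut => ?_⟩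
  have hn' : (2 : ℝ) ≤ n := by exact_mod_cast hn
  have hq₀ : 0 < p₁ / n := by positivity
  have hq₁ : p₁ / n ≤ 1 := (div_le_one (by positivity)).mpr (by linarith)
  have hu : 2 ≤ (n : ℝ) / p₁ := by
    rw [le_div_iff₀ hp₀]
    nlinarith
  have htsum := ENNReal.tsum_le_of_le_one_of_le_mul_one_sub_pow (by linarith) hq₀ hq₁
    (survivalProb_le_one _) (MoeadOMM.survivalProb_le (N := N) (by omega) hmut)
  have hlog : 0 ≤ Real.log (2 * n) := Real.log_nonneg (by linarith)
  refine (ENNReal.natCast_add_one_mul_one_add_le N (by positivity) htsum).trans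
    (ENNReal.ofReal_le_ofReal ?_)
  rw [div_div_eq_mul_div, mul_div_assoc]
  exact add_one_mul_two_add_log_mul_le hn' (by exact_mod_cast hN) hu

end
end

section
/- For every β ∈ (1,2) there exists a constant c > 0 (depending only on β) such that the following holds for all integers n ≥ 2, all N ∈ [1..n] with N dividing n, all x_0,…,x_N ∈ {0,1}^n with |x_j|_0 = j·n/N for every j ∈ [0..N], and every integer u with 1 ≤ u ≤ n/2 − 1: if y_0,…,y_N are obtained by applying power-law mutation with exponent β independently to x_0,…,x_N, then the probability that there exists j ∈ [0..N] with |y_j|_0 = u is at least c·N·n^{−β}. -/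
open scoped ENNReal Classical

noncomputable section

/-- The joint law of `m` independent samples, one from each of the given distributions. -/
def jointPMF {α : Type*} [Inhabited α] {m : ℕ} (μ : Fin m → PMF α) : PMF (Fin m → α) :=
  (List.finRange m).foldl
    (fun p i => p.bind fun g => (μ i).map fun y => Function.update g i y)
    (PMF.pure fun _ => default)

/-!
Let `x` have fewer than `u` zeros. Flipping the positions of `x` one at a time, in a uniformly
random order, changes the number of zeros by `±1` per step, from `zeros x < u` up to
`n - zeros x > u`; so some prefix of length `d ≤ zeros x + u < 2u` leaves exactly `u` zeros.
Given its strength `d`, power-law mutation flips exactly such a random prefix, so it produces `u`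
zeros with probability at least `(2u)^{-β} / C_β ≥ p := (2u)^{-β} (β-1)/β`. At least
`K ≥ uN/n` of the parents `x_j` have fewer than `u` zeros, so all offspring miss `u` with
probability at most `(1-p)^K ≤ 1/(1+Kp)`, and `Kp ≥ 2^{-β} (β-1)/β · N n^{-β}`.
-/

open Finset

section Flips

variable {n : ℕ}

def flipSet (x : BitString n) (S : Finset (Fin n)) : BitString n :=
  fun i => if i ∈ S then !x i else x i

@[simp]
lemma flipSet_empty (x : BitString n) : flipSet x ∅ = x := by
  funext i; simp [flipSet]

lemma hamming_flipSet (x : BitString n) (S : Finset (Fin n)) : hamming x (flipSet x S) = #S := by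
  unfold hamming
  congr 1
  ext i
  by_cases h : i ∈ S <;> simp [flipSet, h]

lemma flipSet_filter_ne (x y : BitString n) : flipSet x {i | x i ≠ y i} = y := by
  funext i
  simp only [flipSet, mem_filter, mem_univ, true_and]
  cases x i <;> cases y i <;> rfl

lemma filter_ne_flipSet (x : BitString n) (S : Finset (Fin n)) :
    ({i | x i ≠ flipSet x S i} : Finset (Fin n)) = S := by
  ext i
  by_cases h : i ∈ S <;> simp [flipSet, h]

lemma zeros_flipSet_insert_le (x : BitString n) (S : Finset (Fin n)) (i : Fin n) :
    zeros (flipSet x (insert i S)) ≤ zeros (flipSet x S) + 1 := by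
  unfold zeros
  refine (card_le_card fun j hj => ?_).trans (card_insert_le i _)
  by_cases hji : j = i
  · simp [hji]
  · simp_all [flipSet]

lemma card_le_zeros_flipSet_add_zeros (x : BitString n) (S : Finset (Fin n)) :
    #S ≤ zeros (flipSet x S) + zeros x := by
  rw [← card_filter_add_card_filter_not (fun i => x i = true)]
  unfold zeros
  gcongr
  · exact fun i hi => by simp_all [flipSet]
  · exact fun i hi => by simp_all

end Flips

section FlipCounts

open scoped FinsetFamily

variable {n : ℕ} (x : BitString n)

def flipsAtMost (u d : ℕ) : Finset (Finset (Fin n)) :=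
  {S ∈ powersetCard d univ | zeros (flipSet x S) ≤ u}

def flipsExactly (u d : ℕ) : Finset (Finset (Fin n)) :=
  {S ∈ powersetCard d univ | zeros (flipSet x S) = u}

lemma card_flipsAtMost_succ (u d : ℕ) :
    #(flipsAtMost x (u + 1) d) = #(flipsAtMost x u d) + #(flipsExactly x (u + 1) d) := by
  rw [flipsAtMost, ← card_filter_add_card_filter_not (fun S => zeros (flipSet x S) ≤ u),
    filter_filter, filter_filter]
  congr 2 <;> ext S <;>
    simp only [flipsAtMost, flipsExactly, mem_filter, and_congr_right_iff] <;> omega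

lemma card_flipsAtMost_zero {u : ℕ} (h : zeros x ≤ u) : #(flipsAtMost x u 0) = 1 := by
  simp [flipsAtMost, filter_singleton, h]

lemma flipsExactly_zero {u : ℕ} (h : zeros x ≠ u) : flipsExactly x u 0 = ∅ := by
  simp [flipsExactly, h]

lemma flipsAtMost_eq_empty {u d : ℕ} (h : zeros x + u < d) : flipsAtMost x u d = ∅ := by
  refine filter_eq_empty_iff.2 fun S hS hz => ?_
  have := card_le_zeros_flipSet_add_zeros x S
  rw [(mem_powersetCard.1 hS).2] at this
  omega

lemma upShadow_flipsAtMost_subset (u d : ℕ) :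
    ∂⁺ (flipsAtMost x u d) ⊆ flipsAtMost x (u + 1) (d + 1) := by
  intro T hT
  obtain ⟨S, hS, i, hi, rfl⟩ := mem_upShadow_iff.1 hT
  simp only [flipsAtMost, mem_filter, mem_powersetCard] at hS ⊢
  refine ⟨⟨subset_univ _, by rw [card_insert_of_notMem hi, hS.1.2]⟩, ?_⟩
  linarith [zeros_flipSet_insert_le x S i]

/-- Local LYM for the complements: `S ↦ Sᶜ` turns up-shadows into shadows. -/
lemma card_flipsAtMost_mul_le (u d : ℕ) :
    #(flipsAtMost x u d) * (n - d) ≤ #(flipsAtMost x (u + 1) (d + 1)) * (d + 1) := by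
  rcases lt_or_ge n d with hnd | hdn
  · simp [Nat.sub_eq_zero_of_le hnd.le]
  have hsized : ((flipsAtMost x u d : Finset (Finset (Fin n))) : Set (Finset (Fin n))).Sized d :=
    fun S hS => (mem_powersetCard.1 (mem_filter.1 hS).1).2
  have lym := local_lubell_yamamoto_meshalkin_inequality_mul hsized.compls
  rw [card_compls, shadow_compls, card_compls, Fintype.card_fin, Nat.sub_sub_self hdn] at lym
  calc #(flipsAtMost x u d) * (n - d) ≤ #(∂⁺ (flipsAtMost x u d)) * (d + 1) := lym
    _ ≤ _ := by gcongr; exact upShadow_flipsAtMost_subset x u d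

lemma card_flipsAtMost_div_choose_le {u d : ℕ} (hd : d < n) :
    (#(flipsAtMost x u d) : ℝ) / n.choose d
      ≤ #(flipsAtMost x (u + 1) (d + 1)) / n.choose (d + 1) := by
  have hchoose : (n.choose (d + 1) : ℝ) * (d + 1) = n.choose d * (n - d : ℕ) := by
    exact_mod_cast Nat.choose_succ_right_eq n d
  have hcount : (#(flipsAtMost x u d) : ℝ) * (n - d : ℕ)
      ≤ #(flipsAtMost x (u + 1) (d + 1)) * (d + 1) := by
    exact_mod_cast card_flipsAtMost_mul_le x u d
  have hpos {k : ℕ} (hk : k ≤ n) : (0 : ℝ) < n.choose k := by exact_mod_cast Nat.choose_pos hk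
  rw [div_le_div_iff₀ (hpos hd.le) (hpos hd)]
  refine le_of_mul_le_mul_right ?_ (by positivity : (0 : ℝ) < d + 1)
  calc (#(flipsAtMost x u d) : ℝ) * n.choose (d + 1) * (d + 1)
      = #(flipsAtMost x u d) * (n - d : ℕ) * n.choose d := by rw [mul_assoc, hchoose]; ring
    _ ≤ #(flipsAtMost x (u + 1) (d + 1)) * (d + 1) * n.choose d := by gcongr
    _ = _ := by ring

lemma card_flipsAtMost_div_choose_le_sum {u d : ℕ} (hn : zeros x + (u + 1) < n)
    (hd : d ≤ zeros x + (u + 1) + 1) :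
    (#(flipsAtMost x (u + 1) d) : ℝ) / n.choose d
      ≤ ∑ e ∈ Icc d (zeros x + (u + 1)), (#(flipsExactly x (u + 1) e) : ℝ) / n.choose e := by
  induction hd using Nat.decreasingInduction with
  | self => simp [flipsAtMost_eq_empty]
  | of_succ d hd ih =>
    rw [← insert_Icc_add_one_left_eq_Icc (by omega), sum_insert (by simp), card_flipsAtMost_succ,
      Nat.cast_add, add_div, add_comm]
    gcongr
    exact (card_flipsAtMost_div_choose_le x (by omega)).trans ih

/-- The `d`-th summand is the probability that flipping the first `d` positions of a uniformly
random ordering leaves `u` zeros, so this is the union bound over the prefix lengths; it is proved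
by telescoping the densities of `flipsAtMost x u d`. -/
lemma one_le_sum_card_flipsExactly_div_choose {u : ℕ} (hz : zeros x < u) (hn : zeros x + u < n) :
    1 ≤ ∑ d ∈ Icc 1 (zeros x + u), (#(flipsExactly x u d) : ℝ) / n.choose d := by
  obtain ⟨u, rfl⟩ : ∃ v, u = v + 1 := ⟨u - 1, by omega⟩
  have h := card_flipsAtMost_div_choose_le_sum x hn (Nat.zero_le _)
  rwa [card_flipsAtMost_zero x (by omega), ← insert_Icc_add_one_left_eq_Icc (Nat.zero_le _),
    sum_insert (by simp), flipsExactly_zero x (by omega), card_empty, Nat.cast_zero, zero_div,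
    zero_add, Nat.choose_zero_right, Nat.cast_one, div_one] at h

end FlipCounts

section PowerLawConstant

lemma one_le_powC (β : ℝ) {n : ℕ} (hn : 1 ≤ n) : 1 ≤ powC β n := by
  unfold powC
  calc (1 : ℝ) = ((1 : ℕ) : ℝ) ^ (-β) := by simp
    _ ≤ _ := single_le_sum (f := fun i : ℕ => (i : ℝ) ^ (-β)) (fun i _ => by positivity)
        (mem_Icc.2 ⟨le_rfl, hn⟩)

lemma integral_one_rpow_neg_le {β : ℝ} (hβ : 1 < β) {b : ℝ} (hb : 1 ≤ b) :
    ∫ t in (1 : ℝ)..b, t ^ (-β) ≤ 1 / (β - 1) := by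
  have h0 : (0 : ℝ) ∉ Set.uIcc 1 b := by simp [Set.uIcc_of_le hb]
  rw [integral_rpow (Or.inr ⟨by linarith, h0⟩), Real.one_rpow, show -β + 1 = -(β - 1) by ring,
    div_neg, ← neg_div, neg_sub]
  gcongr
  linarith [Real.rpow_nonneg (zero_le_one.trans hb) (-(β - 1))]

/-- Integral comparison: `∑_{i=2}^n i^{-β} ≤ ∫_1^n t^{-β} dt ≤ 1/(β-1)`. -/
lemma powC_le {β : ℝ} (hβ : 1 < β) (n : ℕ) : powC β n ≤ β / (β - 1) := by
  have hβ' : 0 < β - 1 := by linarith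
  rcases Nat.eq_zero_or_pos n with rfl | hn
  · simp only [powC, Icc_eq_empty_of_lt zero_lt_one, sum_empty]
    positivity
  have hanti : AntitoneOn (fun t : ℝ => t ^ (-β)) (Set.Icc (1 : ℕ) n) :=
    (Real.antitoneOn_rpow_Ioi_of_exponent_nonpos (by linarith)).mono
      fun t ht => lt_of_lt_of_le zero_lt_one (by simpa using ht.1)
  have htail := hanti.sum_le_integral_Ico hn
  rw [Nat.cast_one] at htail
  calc powC β n = 1 + ∑ i ∈ Ico 1 n, ((i + 1 : ℕ) : ℝ) ^ (-β) := by
        rw [powC, ← Ico_add_one_right_eq_Icc, sum_eq_sum_Ico_succ_bot (by omega),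
          sum_Ico_add' (fun i : ℕ => (i : ℝ) ^ (-β))]
        simp
    _ ≤ 1 + 1 / (β - 1) := by
        gcongr
        exact htail.trans (integral_one_rpow_neg_le hβ (by exact_mod_cast hn))
    _ = β / (β - 1) := by field_simp; ring

end PowerLawConstant

section Mutation

variable {n : ℕ}

lemma card_filter_zeros_eq_hamming_eq (x : BitString n) (u d : ℕ) :
    #{y | zeros y = u ∧ hamming x y = d} = #(flipsExactly x u d) := by
  refine card_nbij' (fun y => ({i | x i ≠ y i} : Finset (Fin n))) (flipSet x)
    (fun y hy => ?_) (fun S hS => ?_) (fun y _ => flipSet_filter_ne x y)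
    (fun S _ => filter_ne_flipSet x S)
  · simp only [coe_filter, mem_univ, true_and, Set.mem_ofPred_eq, flipsExactly,
      mem_powersetCard, subset_univ, flipSet_filter_ne] at hy ⊢
    exact ⟨hy.2, hy.1⟩
  · simp only [flipsExactly, coe_filter, mem_powersetCard, subset_univ, true_and,
      Set.mem_ofPred_eq, mem_univ, hamming_flipSet] at hS ⊢
    exact ⟨hS.2, hS.1⟩

variable {β : ℝ} {mutOp : BitString n → PMF (BitString n)}

lemma IsPowerLawMutation.sum_filter_zeros_eq_hamming_eq (hmut : IsPowerLawMutation n β mutOp)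
    (x : BitString n) (u : ℕ) {d : ℕ} (hd : d ≠ 0) :
    ∑ y with zeros y = u ∧ hamming x y = d, mutOp x y
      = ENNReal.ofReal (#(flipsExactly x u d) * ((d : ℝ) ^ (-β) / powC β n / n.choose d)) := by
  rw [sum_congr rfl fun y hy => by rw [hmut, (mem_filter.1 hy).2.2, if_neg hd], sum_const,
    card_filter_zeros_eq_hamming_eq, nsmul_eq_mul, ENNReal.ofReal_mul (by positivity),
    ENNReal.ofReal_natCast]

lemma IsPowerLawMutation.ofReal_le_toOuterMeasure_zeros_eq (hmut : IsPowerLawMutation n β mutOp)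
    (hβ : 0 ≤ β) {x : BitString n} {u : ℕ} (hz : zeros x < u) (hn : zeros x + u < n) :
    ENNReal.ofReal (((zeros x + u : ℕ) : ℝ) ^ (-β) / powC β n)
      ≤ (mutOp x).toOuterMeasure {y | zeros y = u} := by
  set m := zeros x + u
  have hC : 0 < powC β n := zero_lt_one.trans_le (one_le_powC β (by omega))
  have hreal : (m : ℝ) ^ (-β) / powC β n
      ≤ ∑ d ∈ Icc 1 m, #(flipsExactly x u d) * ((d : ℝ) ^ (-β) / powC β n / n.choose d) := by
    calc (m : ℝ) ^ (-β) / powC β n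
        ≤ (∑ d ∈ Icc 1 m, (#(flipsExactly x u d) : ℝ) / n.choose d) * (m ^ (-β) / powC β n) :=
          le_mul_of_one_le_left (by positivity) (one_le_sum_card_flipsExactly_div_choose x hz hn)
      _ ≤ _ := by
          rw [sum_mul]
          refine sum_le_sum fun d hd => ?_
          obtain ⟨hd1, hdm⟩ := mem_Icc.1 hd
          rw [div_mul_eq_mul_div, mul_div_assoc, div_div, div_div]
          refine mul_le_mul_of_nonneg_left (div_le_div_of_nonneg_right ?_ (by positivity))
            (by positivity)
          exact Real.rpow_le_rpow_of_nonpos (Nat.cast_pos.2 hd1) (Nat.cast_le.2 hdm)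
            (neg_nonpos.2 hβ)
  calc ENNReal.ofReal ((m : ℝ) ^ (-β) / powC β n)
      ≤ ∑ d ∈ Icc 1 m, ∑ y with zeros y = u ∧ hamming x y = d, mutOp x y := by
        rw [sum_congr rfl fun d hd => hmut.sum_filter_zeros_eq_hamming_eq x u
          (by linarith [(mem_Icc.1 hd).1]), ← ENNReal.ofReal_sum_of_nonneg fun _ _ => by positivity]
        exact ENNReal.ofReal_le_ofReal hreal
    _ ≤ ∑ y with zeros y = u, mutOp x y := by
        simp_rw [← filter_filter, sum_fiberwise_eq_sum_filter]
        exact sum_le_sum_of_subset (filter_subset _ _)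
    _ = (mutOp x).toOuterMeasure {y | zeros y = u} := by
        rw [← PMF.toOuterMeasure_apply_finset, coe_filter]
        simp

lemma IsPowerLawMutation.ofReal_le_toOuterMeasure_zeros_eq_of_two_mul_le
    (hmut : IsPowerLawMutation n β mutOp) (hβ : 1 < β) {x : BitString n} {u : ℕ}
    (hz : zeros x < u) (hun : 2 * u < n) :
    ENNReal.ofReal ((2 * u : ℝ) ^ (-β) * ((β - 1) / β))
      ≤ (mutOp x).toOuterMeasure {y | zeros y = u} := by
  refine le_trans (ENNReal.ofReal_le_ofReal ?_)
    (hmut.ofReal_le_toOuterMeasure_zeros_eq (by linarith) hz (by omega))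
  have hC : 0 < powC β n := zero_lt_one.trans_le (one_le_powC β (by omega))
  have hbase : (2 * u : ℝ) ^ (-β) ≤ ((zeros x + u : ℕ) : ℝ) ^ (-β) :=
    Real.rpow_le_rpow_of_nonpos (by norm_cast; omega) (by norm_cast; omega) (by linarith)
  have hconst : (β - 1) / β ≤ 1 / powC β n := by
    rw [← one_div_div]
    exact one_div_le_one_div_of_le hC (powC_le hβ n)
  have hc0 : 0 ≤ (β - 1) / β := div_nonneg (by linarith) (by linarith)
  exact (mul_le_mul hbase hconst hc0 (by positivity)).trans_eq (mul_one_div _ _)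

end Mutation

section JointPMF

variable {α ι : Type*}

lemma PMF.toOuterMeasure_compl (p : PMF α) (s : Set α) :
    p.toOuterMeasure sᶜ = 1 - p.toOuterMeasure s := by
  rw [PMF.toOuterMeasure_apply, PMF.toOuterMeasure_apply]
  refine ENNReal.eq_sub_of_add_eq (p.tsum_coe_indicator_ne_top s) ?_
  rw [← ENNReal.tsum_add]
  simp_rw [Set.indicator_compl_add_self_apply]
  exact p.tsum_coe

lemma PMF.map_update_apply [DecidableEq ι] (ν : PMF α) (h g : ι → α) (i : ι) :
    (ν.map fun y => Function.update h i y) g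
      = if g = Function.update h i (g i) then ν (g i) else 0 := by
  rw [PMF.map_apply]
  split_ifs with hg
  · rw [tsum_eq_single (g i) fun a ha => if_neg fun h' => ha (by simp [h']), if_pos hg]
  · refine ENNReal.tsum_eq_zero.2 fun a => if_neg fun h' => hg ?_
    rw [h', Function.update_self]

variable [DecidableEq ι]

lemma foldl_bind_map_update_pure_apply (μ : ι → PMF α) (d : ι → α) {l : List ι} (hl : l.Nodup)
    (g : ι → α) :
    (l.foldl (fun p i => p.bind fun g => (μ i).map fun y => Function.update g i y)
        (PMF.pure d)) g
      = if ∀ j ∉ l, g j = d j then (l.map fun j => μ j (g j)).prod else 0 := by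
  induction l using List.reverseRecOn generalizing g with
  | nil =>
    by_cases hg : g = d
    · simp [hg]
    · simpa [hg] using Function.ne_iff.1 hg
  | append_singleton l i ih =>
    have hl' : l.Nodup := hl.sublist (List.sublist_append_left _ _)
    have hil : i ∉ l := fun h => List.disjoint_of_nodup_append hl h (List.mem_singleton_self i)
    set g₀ := Function.update g i (d i)
    rw [List.foldl_append, List.foldl_cons, List.foldl_nil, PMF.bind_apply, tsum_eq_single g₀]
    · have hprod : (l.map fun j => μ j (g₀ j)) = l.map fun j => μ j (g j) :=
        List.map_congr_left fun j hj => by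
          simp only [g₀, Function.update_of_ne (ne_of_mem_of_not_mem hj hil)]
      have hcond : (∀ j ∉ l, g₀ j = d j) ↔ ∀ j ∉ l ++ [i], g j = d j := by
        simp only [List.mem_append, List.mem_singleton, not_or]
        refine ⟨fun h j hj => ?_, fun h j hjl => ?_⟩
        · simpa [g₀, hj.2] using h j hj.1
        · by_cases hji : j = i
          · simp [g₀, hji]
          · simpa [g₀, hji] using h j ⟨hjl, hji⟩
      rw [PMF.map_update_apply, ih hl', if_pos (show g = Function.update g₀ i (g i) by simp [g₀]),
        hprod, List.map_append, List.prod_append]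
      simp only [hcond, List.map_cons, List.map_nil, List.prod_cons, List.prod_nil, mul_one]
      split_ifs <;> simp
    · intro h hh
      rw [PMF.map_update_apply, ih hl']
      by_cases hd : ∀ j ∉ l, h j = d j
      · refine mul_eq_zero_of_right _ (if_neg fun hg => hh (funext fun j => ?_))
        by_cases hji : j = i
        · simp [g₀, hji, hd i hil]
        · simpa [g₀, hji] using (congrFun hg j).symm
      · rw [if_neg hd, zero_mul]

variable [Inhabited α] {m : ℕ}

lemma jointPMF_apply (μ : Fin m → PMF α) (g : Fin m → α) : jointPMF μ g = ∏ j, μ j (g j) := by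
  rw [jointPMF, foldl_bind_map_update_pure_apply μ _ (List.nodup_finRange m),
    if_pos fun j hj => absurd (List.mem_finRange j) hj, Fin.prod_univ_def]

lemma jointPMF_toOuterMeasure_pi [Fintype α] (μ : Fin m → PMF α) (t : Fin m → Set α) :
    (jointPMF μ).toOuterMeasure (Set.univ.pi t) = ∏ j, (μ j).toOuterMeasure (t j) := by
  simp_rw [PMF.toOuterMeasure_apply_fintype, Fintype.prod_sum]
  refine sum_congr rfl fun g _ => ?_
  by_cases hg : g ∈ Set.univ.pi t
  · rw [Set.indicator_of_mem hg, jointPMF_apply]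
    exact prod_congr rfl fun j _ => (Set.indicator_of_mem (hg j trivial) _).symm
  · obtain ⟨j, -, hj⟩ := by simpa only [Set.mem_pi, not_forall] using hg
    rw [Set.indicator_of_notMem hg, prod_eq_zero (mem_univ j) (Set.indicator_of_notMem hj _)]

lemma jointPMF_toOuterMeasure_exists_mem [Fintype α] (μ : Fin m → PMF α) (s : Set α) :
    (jointPMF μ).toOuterMeasure {y | ∃ j, y j ∈ s} = 1 - ∏ j, (1 - (μ j).toOuterMeasure s) := by
  have hset : {y : Fin m → α | ∃ j, y j ∈ s} = (Set.univ.pi fun _ => sᶜ)ᶜ := by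
    ext y; simp
  rw [hset, PMF.toOuterMeasure_compl, jointPMF_toOuterMeasure_pi]
  simp_rw [PMF.toOuterMeasure_compl]

end JointPMF

section Estimates

lemma le_card_filter_mul_lt {N q u : ℕ} (hu : u ≤ (N + 1) * q) :
    u ≤ #{j : Fin (N + 1) | (j : ℕ) * q < u} * q := by
  set K := #{j : Fin (N + 1) | (j : ℕ) * q < u}
  by_contra! hK
  have hKN : K < N + 1 := by
    by_contra!
    exact absurd (hu.trans (Nat.mul_le_mul_right q this)) hK.not_ge
  have hsub : Iic (⟨K, hKN⟩ : Fin (N + 1))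
      ⊆ ({j : Fin (N + 1) | (j : ℕ) * q < u} : Finset (Fin (N + 1))) := by
    intro j hj
    have hjK : (j : ℕ) ≤ K := Fin.le_iff_val_le_val.1 (mem_Iic.1 hj)
    exact mem_filter.2 ⟨mem_univ j, (Nat.mul_le_mul_right q hjK).trans_lt hK⟩
  have hcard : K + 1 ≤ K := (Fin.card_Iic _).symm.trans_le (card_le_card hsub)
  omega

lemma mul_div_one_add_mul_le_one_sub_one_sub_pow {p : ℝ} (hp0 : 0 ≤ p) (hp1 : p ≤ 1) (K : ℕ) :
    K * p / (1 + K * p) ≤ 1 - (1 - p) ^ K := by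
  have hbound : (1 - p) ^ K * (1 + K * p) ≤ 1 :=
    calc (1 - p) ^ K * (1 + K * p) ≤ (1 - p) ^ K * (1 + p) ^ K := by
          gcongr
          exact one_add_mul_le_pow (by linarith) K
      _ = (1 - p ^ 2) ^ K := by rw [← mul_pow]; ring
      _ ≤ 1 := pow_le_one₀ (by nlinarith) (by nlinarith)
  rw [div_le_iff₀ (by positivity)]
  nlinarith

lemma natCast_mul_rpow_neg_le {β : ℝ} (hβ : 1 ≤ β) {u n N K : ℕ} (hu : 0 < u) (hun : u ≤ n)
    (h : u * N ≤ K * n) : (N : ℝ) * (n : ℝ) ^ (-β) ≤ K * (u : ℝ) ^ (-β) := by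
  have hu' : (0 : ℝ) < u := by exact_mod_cast hu
  have hn' : (0 : ℝ) < n := by exact_mod_cast hu.trans_le hun
  have hrpow (t : ℝ) (ht : 0 < t) : t ^ (1 - β) = t * t ^ (-β) := by
    rw [sub_eq_add_neg, Real.rpow_add ht, Real.rpow_one]
  refine le_of_mul_le_mul_left ?_ hu'
  calc (u : ℝ) * (N * (n : ℝ) ^ (-β)) = (u * N : ℕ) * (n : ℝ) ^ (-β) := by push_cast; ring
    _ ≤ (K * n : ℕ) * (n : ℝ) ^ (-β) := by gcongr
    _ = K * (n : ℝ) ^ (1 - β) := by rw [hrpow n hn']; push_cast; ring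
    _ ≤ K * (u : ℝ) ^ (1 - β) := mul_le_mul_of_nonneg_left
        (Real.rpow_le_rpow_of_nonpos hu' (by exact_mod_cast hun) (by linarith)) (Nat.cast_nonneg K)
    _ = u * (K * (u : ℝ) ^ (-β)) := by rw [hrpow u hu']; ring

lemma rpow_neg_mul_sub_one_div_le_one {β t : ℝ} (hβ : 1 ≤ β) (ht : 1 ≤ t) :
    t ^ (-β) * ((β - 1) / β) ≤ 1 :=
  mul_le_one₀ (Real.rpow_le_one_of_one_le_of_nonpos ht (by linarith))
    (div_nonneg (by linarith) (by linarith)) ((div_le_one (by linarith)).2 (by linarith))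

/-- `a := 2^{-β} (β-1)/β · N n^{-β}` satisfies `a ≤ 1` and `a ≤ K p` for `p := (2u)^{-β} (β-1)/β`,
so `a / 2 ≤ a / (1 + a) ≤ K p / (1 + K p)`. -/
lemma le_one_sub_one_sub_pow {β : ℝ} (hβ : 1 < β) {u n N K : ℕ} (hu : 0 < u) (hun : u ≤ n)
    (hNn : N ≤ n) (h : u * N ≤ K * n) :
    2 ^ (-β) * ((β - 1) / β) / 2 * N * (n : ℝ) ^ (-β)
      ≤ 1 - (1 - (2 * u : ℝ) ^ (-β) * ((β - 1) / β)) ^ K := by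
  have hβ' : 0 < β - 1 := by linarith
  have hn : (1 : ℝ) ≤ n := by exact_mod_cast hu.trans_le hun
  have hNn' : (N : ℝ) * (n : ℝ) ^ (-β) ≤ 1 :=
    calc (N : ℝ) * (n : ℝ) ^ (-β) ≤ n * (n : ℝ) ^ (-1 : ℝ) :=
          mul_le_mul (by exact_mod_cast hNn) (Real.rpow_le_rpow_of_exponent_le hn (by linarith))
            (by positivity) (by positivity)
      _ = 1 := by rw [Real.rpow_neg_one, mul_inv_cancel₀ (by positivity)]
  set a := (2 : ℝ) ^ (-β) * ((β - 1) / β) * (N * (n : ℝ) ^ (-β))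
  set p := (2 * u : ℝ) ^ (-β) * ((β - 1) / β)
  have ha0 : 0 ≤ a := by positivity
  have ha1 : a ≤ 1 :=
    mul_le_one₀ (rpow_neg_mul_sub_one_div_le_one hβ.le one_le_two) (by positivity) hNn'
  have hp0 : 0 ≤ p := by positivity
  have hp1 : p ≤ 1 := rpow_neg_mul_sub_one_div_le_one hβ.le (by norm_cast; omega)
  have hap : a ≤ K * p := by
    calc a = (2 : ℝ) ^ (-β) * ((β - 1) / β) * (N * (n : ℝ) ^ (-β)) := rfl
      _ ≤ (2 : ℝ) ^ (-β) * ((β - 1) / β) * (K * (u : ℝ) ^ (-β)) :=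
          mul_le_mul_of_nonneg_left (natCast_mul_rpow_neg_le hβ.le hu hun h) (by positivity)
      _ = K * p := by simp only [p, Real.mul_rpow zero_le_two (Nat.cast_nonneg u)]; ring
  calc 2 ^ (-β) * ((β - 1) / β) / 2 * N * (n : ℝ) ^ (-β) = a / 2 := by ring
    _ ≤ a / (1 + a) := div_le_div_of_nonneg_left ha0 (by linarith) (by linarith)
    _ ≤ K * p / (1 + K * p) := by
        rw [div_le_div_iff₀ (by linarith) (by linarith)]; nlinarith
    _ ≤ _ := mul_div_one_add_mul_le_one_sub_one_sub_pow hp0 hp1 K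

lemma ofReal_one_sub_one_sub_pow_le_one_sub_prod {ι : Type*} [Fintype ι] {p : ℝ} (hp0 : 0 ≤ p)
    (hp1 : p ≤ 1) {P : ι → ℝ≥0∞} {s : Finset ι} (h : ∀ j ∈ s, ENNReal.ofReal p ≤ P j) :
    ENNReal.ofReal (1 - (1 - p) ^ #s) ≤ 1 - ∏ j, (1 - P j) := by
  rw [ENNReal.ofReal_sub _ (pow_nonneg (by linarith) _), ENNReal.ofReal_one,
    ENNReal.ofReal_pow (by linarith), ENNReal.ofReal_sub _ hp0, ENNReal.ofReal_one]
  refine tsub_le_tsub_left ((prod_le_prod_of_subset_of_le_one' (subset_univ s)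
    fun j _ _ => tsub_le_self).trans (prod_le_pow_card _ _ _ fun j hj => ?_)) 1
  exact tsub_le_tsub_left (h j hj) 1

end Estimates

/-- If `x_0, …, x_N` satisfy `|x_j|₀ = j·n/N` and `y_0, …, y_N` are obtained
by independent power-law mutations (exponent `β ∈ (1,2)`) of `x_0, …, x_N`, then for every
integer `u` with `1 ≤ u ≤ n/2 − 1`, the probability that some `y_j` has exactly `u` zeros
is at least `c·N·n^{−β}`, with `c > 0` depending only on `β`. -/
theorem power_law_iteration_hits_u :
    ∀ β : ℝ, 1 < β → β < 2 →
      ∃ c : ℝ, 0 < c ∧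
        ∀ n N : ℕ, 2 ≤ n → 1 ≤ N → N ≤ n → N ∣ n →
          ∀ mutOp : BitString n → PMF (BitString n), IsPowerLawMutation n β mutOp →
            ∀ x : Fin (N + 1) → BitString n,
              (∀ j : Fin (N + 1), zeros (x j) = (j : ℕ) * (n / N)) →
              ∀ u : ℕ, 1 ≤ u → (u : ℝ) ≤ (n : ℝ) / 2 - 1 →
                ENNReal.ofReal (c * N * (n : ℝ) ^ (-β))
                  ≤ (jointPMF fun j => mutOp (x j)).toOuterMeasure
                      {y | ∃ j : Fin (N + 1), zeros (y j) = u} := by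
  intro β hβ1 _
  have hβ' : 0 < β - 1 := by linarith
  refine ⟨2 ^ (-β) * ((β - 1) / β) / 2, by positivity, ?_⟩
  intro n N _ _ hNn hdvd mutOp hmut x hx u hu hun
  have h2u : 2 * u < n := by exact_mod_cast (by linarith : (2 * u : ℝ) < n)
  set p := (2 * u : ℝ) ^ (-β) * ((β - 1) / β)
  set G : Finset (Fin (N + 1)) := {j | (j : ℕ) * (n / N) < u}
  have hGn : u * N ≤ #G * n := by
    have hq : n / N * N = n := Nat.div_mul_cancel hdvd
    have := le_card_filter_mul_lt (N := N) (q := n / N) (u := u) (by nlinarith)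
    calc u * N ≤ #G * (n / N) * N := Nat.mul_le_mul_right N this
      _ = #G * n := by rw [mul_assoc, hq]
  have hhit : ∀ j ∈ G, ENNReal.ofReal p ≤ (mutOp (x j)).toOuterMeasure {y | zeros y = u} :=
    fun j hj => hmut.ofReal_le_toOuterMeasure_zeros_eq_of_two_mul_le hβ1
      (by rw [hx]; exact (mem_filter.1 hj).2) h2u
  have hp1 : p ≤ 1 := rpow_neg_mul_sub_one_div_le_one hβ1.le (by norm_cast; omega)
  calc ENNReal.ofReal (2 ^ (-β) * ((β - 1) / β) / 2 * N * (n : ℝ) ^ (-β))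
      ≤ ENNReal.ofReal (1 - (1 - p) ^ #G) :=
        ENNReal.ofReal_le_ofReal (le_one_sub_one_sub_pow hβ1 (by omega) (by omega) hNn hGn)
    _ ≤ 1 - ∏ j, (1 - (mutOp (x j)).toOuterMeasure {y | zeros y = u}) :=
        ofReal_one_sub_one_sub_pow_le_one_sub_prod (by positivity) hp1 hhit
    _ = _ := (jointPMF_toOuterMeasure_exists_mem _ _).symm

end
end

section
/- For every β ∈ (1,2) there exists a constant c > 0 (depending only on β) such that the following holds for all integers n ≥ 1, all x ∈ {0,1}^n with u := |x|_0 ≤ n/4, and all integers v with u + 1 ≤ v ≤ n/2 − 1: if y is the offspring of power-law mutation with exponent β applied to x, then Pr[|y|_0 = v] ≥ c·(v − u)^{−β}. -/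
open scoped ENNReal Classical

noncomputable section

/-! Write `u = |x|₀` and `v = u + k`. An offspring that flips `Δ` zeros and `k + Δ` ones of `x`
has `v` zeros and needs mutation strength `k + 2Δ`, which for `Δ ≤ 2k` has probability at least
`(5k)^{-β} / C_β ≥ (5k)^{-β} / ζ(β)`. Given that strength, `Δ` is hypergeometric, so it suffices
that `∑_{Δ ≤ D} Pr[H(k + 2Δ) = Δ] ≥ 3/8` for `D = min u (2k)`, where `H(m)` is the number of zeros
of `x` among `m` uniformly drawn positions. Since `H(m + 1)` stochastically dominates `H(m)`, this
sum is at least `Pr[H(k + 2D) ≤ D]`, which is `1` if `D = u` and, if `D = 2k`, at least `3/8` by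
Markov's inequality, as `E[H(5k)] = 5ku/n ≤ 5k/4`. -/

open Finset

/-- The number of `m`-subsets of an `n`-set meeting a fixed `u`-subset in exactly `j` points;
only meaningful for `j ≤ m`, because `m - j` truncates. -/
def hypergeomCount (n u m j : ℕ) : ℕ := u.choose j * (n - u).choose (m - j)

section HypergeomCount

variable {n u m : ℕ}

theorem sum_range_hypergeomCount (hu : u ≤ n) :
    ∑ j ∈ range (m + 1), hypergeomCount n u m j = n.choose m := by
  have h := Nat.add_choose_eq u (n - u) m
  rw [Nat.add_sub_cancel' hu, Nat.sum_antidiagonal_eq_sum_range_succ_mk] at h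
  exact h.symm

theorem succ_mul_hypergeomCount_succ (hu : 1 ≤ u) (j : ℕ) :
    (j + 1) * hypergeomCount n u (m + 1) (j + 1) = u * hypergeomCount (n - 1) (u - 1) m j := by
  obtain ⟨u, rfl⟩ : ∃ u', u = u' + 1 := ⟨u - 1, by omega⟩
  have hpascal := Nat.add_one_mul_choose_eq u j
  simp only [hypergeomCount, Nat.add_sub_cancel, Nat.add_sub_add_right,
    show n - 1 - u = n - (u + 1) by omega]
  rw [← mul_assoc, ← mul_assoc, hpascal, mul_comm (j + 1)]

theorem sum_range_mul_hypergeomCount (hu : 1 ≤ u) (hun : u ≤ n) :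
    ∑ j ∈ range (m + 2), j * hypergeomCount n u (m + 1) j = u * (n - 1).choose m := by
  rw [sum_range_succ', zero_mul, add_zero,
    sum_congr rfl fun j _ => succ_mul_hypergeomCount_succ hu j, ← mul_sum,
    sum_range_hypergeomCount (by omega)]

theorem hypergeomCount_succ_mul_sub {j : ℕ} (hj : j ≤ m) :
    hypergeomCount n u (m + 1) j * (m + 1 - j)
      = hypergeomCount n u m j * (n - u - (m - j)) := by
  rw [hypergeomCount, hypergeomCount, show m + 1 - j = m - j + 1 by omega, mul_assoc,
    Nat.choose_succ_right_eq, mul_assoc]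

theorem hypergeomCount_succ_succ_mul (j : ℕ) :
    hypergeomCount n u (m + 1) (j + 1) * (j + 1) = hypergeomCount n u m j * (u - j) := by
  rw [hypergeomCount, hypergeomCount, Nat.add_sub_add_right, mul_right_comm,
    Nat.choose_succ_right_eq, mul_right_comm]

theorem hypergeomCount_mul_sub_add_mul_sub (hu : u ≤ n) {j : ℕ} (hj : j ≤ m) :
    hypergeomCount n u m j * (n - u - (m - j)) + hypergeomCount n u m j * (u - j)
      = hypergeomCount n u m j * (n - m) := by
  rcases Nat.lt_or_ge u j with h | h
  · simp [hypergeomCount, Nat.choose_eq_zero_of_lt h]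
  rcases Nat.lt_or_ge (n - u) (m - j) with h' | h'
  · simp [hypergeomCount, Nat.choose_eq_zero_of_lt h']
  rw [← mul_add]
  congr 1
  omega

/-- The identity behind the monotonicity of the hypergeometric distribution function in the
number of draws. -/
theorem sum_range_hypergeomCount_succ_mul_add (hu : u ≤ n) {D : ℕ} (hD : D ≤ m) :
    (∑ j ∈ range (D + 1), hypergeomCount n u (m + 1) j) * (m + 1)
        + hypergeomCount n u m D * (u - D)
      = (∑ j ∈ range (D + 1), hypergeomCount n u m j) * (n - m) := by
  have hsplit : ∀ j ∈ range (D + 1), hypergeomCount n u (m + 1) j * (m + 1)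
      = hypergeomCount n u m j * (n - u - (m - j)) + hypergeomCount n u (m + 1) j * j := by
    intro j hj
    have hjm : j ≤ m := by rw [mem_range] at hj; omega
    rw [← hypergeomCount_succ_mul_sub hjm, ← mul_add]
    congr 1
    omega
  have hshift : ∑ j ∈ range (D + 1), hypergeomCount n u (m + 1) j * j
      = ∑ j ∈ range D, hypergeomCount n u m j * (u - j) := by
    rw [sum_range_succ', mul_zero, add_zero]
    exact sum_congr rfl fun j _ => hypergeomCount_succ_succ_mul j
  rw [sum_mul, sum_congr rfl hsplit, sum_add_distrib, hshift, add_assoc,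
    ← sum_range_succ (fun j => hypergeomCount n u m j * (u - j)), ← sum_add_distrib, sum_mul]
  refine sum_congr rfl fun j hj => hypergeomCount_mul_sub_add_mul_sub hu ?_
  rw [mem_range] at hj
  omega

end HypergeomCount

def hypergeom (n u m j : ℕ) : ℝ := hypergeomCount n u m j / n.choose m

def hypergeomCDF (n u m D : ℕ) : ℝ := ∑ j ∈ range (D + 1), hypergeom n u m j

section Hypergeom

variable {n u m : ℕ}

theorem hypergeom_nonneg (j : ℕ) : 0 ≤ hypergeom n u m j := by
  unfold hypergeom
  positivity

theorem sum_range_hypergeom (hu : u ≤ n) (hm : m ≤ n) :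
    ∑ j ∈ range (m + 1), hypergeom n u m j = 1 := by
  have hpos : (0 : ℝ) < n.choose m := by exact_mod_cast Nat.choose_pos hm
  simp only [hypergeom]
  rw [← sum_div, ← Nat.cast_sum, sum_range_hypergeomCount hu, div_self hpos.ne']

theorem sum_range_mul_hypergeom (hu : 1 ≤ u) (hun : u ≤ n) (hm : 1 ≤ m) (hmn : m ≤ n) :
    ∑ j ∈ range (m + 1), (j : ℝ) * hypergeom n u m j = u * m / n := by
  obtain ⟨m, rfl⟩ : ∃ m', m = m' + 1 := ⟨m - 1, by omega⟩
  have hpascal : (n : ℝ) * (n - 1).choose m = n.choose (m + 1) * (m + 1) := by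
    have h := Nat.add_one_mul_choose_eq (n - 1) m
    rw [Nat.sub_add_cancel (by omega)] at h
    exact_mod_cast h
  have hn : (0 : ℝ) < n := by exact_mod_cast (show 0 < n by omega)
  have hch : (0 : ℝ) < n.choose (m + 1) := by exact_mod_cast Nat.choose_pos hmn
  simp only [hypergeom, mul_div_assoc']
  rw [← sum_div]
  norm_cast
  rw [sum_range_mul_hypergeomCount hu hun]
  push_cast
  rw [div_eq_div_iff hch.ne' hn.ne']
  linear_combination (u : ℝ) * hpascal

theorem hypergeomCDF_succ_le (hu : u ≤ n) {D : ℕ} (hD : D ≤ m) (hm : m + 1 ≤ n) :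
    hypergeomCDF n u (m + 1) D ≤ hypergeomCDF n u m D := by
  have hstep := sum_range_hypergeomCount_succ_mul_add hu hD
  have hpascal := Nat.choose_succ_right_eq n m
  have key : (∑ j ∈ range (D + 1), hypergeomCount n u (m + 1) j) * n.choose m
      ≤ (∑ j ∈ range (D + 1), hypergeomCount n u m j) * n.choose (m + 1) := by
    refine Nat.le_of_mul_le_mul_right ?_ (Nat.add_one_pos m)
    calc _ = (∑ j ∈ range (D + 1), hypergeomCount n u (m + 1) j) * (m + 1) * n.choose m := by
          ring
      _ ≤ (∑ j ∈ range (D + 1), hypergeomCount n u m j) * (n - m) * n.choose m :=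
          Nat.mul_le_mul_right _ (hstep ▸ Nat.le_add_right _ _)
      _ = _ := by rw [mul_assoc, mul_comm (n - m), ← hpascal]; ring
  simp only [hypergeomCDF, hypergeom]
  rw [← sum_div, ← sum_div, ← Nat.cast_sum, ← Nat.cast_sum,
    div_le_div_iff₀ (by exact_mod_cast Nat.choose_pos hm)
      (by exact_mod_cast Nat.choose_pos (by omega : m ≤ n))]
  exact_mod_cast key

theorem hypergeomCDF_le_sum_diag (hu : u ≤ n) (k : ℕ) :
    ∀ D, k + 2 * D ≤ n →
      hypergeomCDF n u (k + 2 * D) D ≤ ∑ Δ ∈ range (D + 1), hypergeom n u (k + 2 * Δ) Δ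
  | 0, _ => le_rfl
  | D + 1, h => by
    have hrec := hypergeomCDF_le_sum_diag hu k D (by omega)
    have h1 := hypergeomCDF_succ_le (D := D) hu (m := k + 2 * D + 1) (by omega) (by omega)
    have h2 := hypergeomCDF_succ_le (D := D) hu (m := k + 2 * D) (by omega) (by omega)
    rw [hypergeomCDF, sum_range_succ (fun j => hypergeom n u (k + 2 * (D + 1)) j),
      sum_range_succ (fun Δ => hypergeom n u (k + 2 * Δ) Δ) (D + 1),
      show k + 2 * (D + 1) = k + 2 * D + 1 + 1 by ring]
    exact add_le_add_left (h1.trans (h2.trans hrec)) _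

theorem hypergeomCDF_eq_one (hun : u ≤ n) {D : ℕ} (huD : u ≤ D) (hD : D ≤ m) (hm : m ≤ n) :
    hypergeomCDF n u m D = 1 := by
  rw [← sum_range_hypergeom hun hm, hypergeomCDF]
  refine sum_subset (range_subset_range.mpr (by omega)) fun j _ hj => ?_
  rw [mem_range, not_lt] at hj
  simp [hypergeom, hypergeomCount, Nat.choose_eq_zero_of_lt (show u < j by omega)]

/-- Markov's inequality for the hypergeometric distribution, whose mean is `u * m / n`. -/
theorem one_sub_hypergeomCDF_mul_le (hu : 1 ≤ u) (hun : u ≤ n) (hm : 1 ≤ m) (hmn : m ≤ n)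
    {D : ℕ} (hD : D ≤ m) :
    (1 - hypergeomCDF n u m D) * (D + 1) ≤ u * m / n := by
  have htail : 1 - hypergeomCDF n u m D = ∑ j ∈ Ico (D + 1) (m + 1), hypergeom n u m j := by
    rw [← sum_range_hypergeom hun hmn, hypergeomCDF, range_eq_Ico, range_eq_Ico,
      ← sum_Ico_consecutive _ (Nat.zero_le (D + 1)) (by omega : D + 1 ≤ m + 1)]
    ring
  rw [htail, sum_mul, ← sum_range_mul_hypergeom hu hun hm hmn]
  calc ∑ j ∈ Ico (D + 1) (m + 1), hypergeom n u m j * (D + 1)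
      ≤ ∑ j ∈ Ico (D + 1) (m + 1), (j : ℝ) * hypergeom n u m j := by
        refine sum_le_sum fun j hj => ?_
        rw [mul_comm]
        have : (D : ℝ) + 1 ≤ j := by exact_mod_cast (mem_Ico.mp hj).1
        exact mul_le_mul_of_nonneg_right this (hypergeom_nonneg j)
    _ ≤ ∑ j ∈ range (m + 1), (j : ℝ) * hypergeom n u m j := by
        refine sum_le_sum_of_subset_of_nonneg (fun j hj => ?_) fun j _ _ => ?_
        · exact mem_range.mpr (mem_Ico.mp hj).2
        · exact mul_nonneg j.cast_nonneg (hypergeom_nonneg j)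

theorem three_eighths_le_sum_diag_hypergeom {k : ℕ} (hk : 1 ≤ k) (h4u : 4 * u ≤ n)
    (hkn : k + 2 * u ≤ n) :
    3 / 8 ≤ ∑ Δ ∈ range (min u (2 * k) + 1), hypergeom n u (k + 2 * Δ) Δ := by
  refine le_trans ?_ (hypergeomCDF_le_sum_diag (by omega) k _ (by omega))
  rcases le_total u (2 * k) with h | h
  · rw [min_eq_left h, hypergeomCDF_eq_one (by omega) le_rfl (by omega) (by omega)]
    norm_num
  rw [min_eq_right h]
  have hmarkov := one_sub_hypergeomCDF_mul_le (n := n) (u := u) (D := 2 * k)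
    (m := k + 2 * (2 * k)) (by omega) (by omega) (by omega) (by omega) (by omega)
  have hn : (0 : ℝ) < n := by exact_mod_cast (show 0 < n by omega)
  have hmean : (u : ℝ) * ↑(k + 2 * (2 * k)) / n ≤ 5 * k / 4 := by
    rw [div_le_iff₀ hn]
    have : 4 * (u : ℝ) ≤ n := by exact_mod_cast h4u
    push_cast
    nlinarith [Nat.cast_nonneg (α := ℝ) k]
  push_cast at hmarkov hmean
  nlinarith

end Hypergeom

section FlipBits

variable {n : ℕ}

def flipBits (x : BitString n) (S : Finset (Fin n)) : BitString n :=
  fun i => if i ∈ S then !x i else x i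

def zeroSet (x : BitString n) : Finset (Fin n) := univ.filter fun i => x i = false

theorem flipBits_ne_iff (x : BitString n) (S : Finset (Fin n)) (i : Fin n) :
    flipBits x S i ≠ x i ↔ i ∈ S := by
  by_cases h : i ∈ S <;> simp [flipBits, h]

theorem flipBits_injective (x : BitString n) : Function.Injective (flipBits x) := by
  intro S T h
  ext i
  rw [← flipBits_ne_iff x S, ← flipBits_ne_iff x T, h]

theorem hamming_flipBits (x : BitString n) (S : Finset (Fin n)) :
    hamming x (flipBits x S) = S.card := by
  simp only [hamming, ne_comm (a := x _), flipBits_ne_iff, filter_mem_eq_inter, univ_inter]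

theorem zeroSet_flipBits_union {x : BitString n} {A B : Finset (Fin n)}
    (hA : A ⊆ zeroSet x) (hB : B ⊆ (zeroSet x)ᶜ) :
    zeroSet (flipBits x (A ∪ B)) = (zeroSet x \ A) ∪ B := by
  ext i
  have hA' := @hA i
  have hB' := @hB i
  by_cases hiA : i ∈ A <;> by_cases hiB : i ∈ B <;>
    simp_all [zeroSet, flipBits]

theorem zeros_flipBits_union {x : BitString n} {A B : Finset (Fin n)}
    (hA : A ⊆ zeroSet x) (hB : B ⊆ (zeroSet x)ᶜ) :
    zeros (flipBits x (A ∪ B)) + A.card = zeros x + B.card := by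
  have hdisj : Disjoint (zeroSet x \ A) B :=
    disjoint_of_subset_left sdiff_subset (disjoint_of_subset_right hB disjoint_compl_right)
  rw [zeros, ← zeroSet, zeroSet_flipBits_union hA hB, card_union_of_disjoint hdisj,
    card_sdiff_of_subset hA, zeros, ← zeroSet]
  have := card_le_card hA
  omega

def flipZerosOnes (x : BitString n) (a b : ℕ) : Finset (BitString n) :=
  (powersetCard a (zeroSet x) ×ˢ powersetCard b (zeroSet x)ᶜ).image
    fun p => flipBits x (p.1 ∪ p.2)

theorem hamming_zeros_of_mem_flipZerosOnes {x y : BitString n} {a b : ℕ}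
    (hy : y ∈ flipZerosOnes x a b) :
    hamming x y = a + b ∧ zeros y + a = zeros x + b := by
  obtain ⟨⟨A, B⟩, hAB, rfl⟩ := mem_image.mp hy
  obtain ⟨⟨hA, rfl⟩, ⟨hB, rfl⟩⟩ := And.imp mem_powersetCard.mp mem_powersetCard.mp
    (mem_product.mp hAB)
  have hdisj : Disjoint A B := disjoint_of_subset_left hA (disjoint_of_subset_right hB
    disjoint_compl_right)
  exact ⟨by rw [hamming_flipBits, card_union_of_disjoint hdisj], zeros_flipBits_union hA hB⟩

theorem card_flipZerosOnes (x : BitString n) (a b : ℕ) :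
    (flipZerosOnes x a b).card = (zeros x).choose a * (n - zeros x).choose b := by
  have hinj : Set.InjOn (fun p : Finset (Fin n) × Finset (Fin n) => flipBits x (p.1 ∪ p.2))
      (powersetCard a (zeroSet x) ×ˢ powersetCard b (zeroSet x)ᶜ : Finset _) := by
    rintro ⟨A, B⟩ hAB ⟨A', B'⟩ hAB' h
    simp only [coe_product, Set.mem_prod, mem_coe, mem_powersetCard] at hAB hAB'
    have hU := flipBits_injective x h
    simp only at hU
    have hinter : ∀ {A B : Finset (Fin n)}, A ⊆ zeroSet x → B ⊆ (zeroSet x)ᶜ →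
        (A ∪ B) ∩ zeroSet x = A ∧ (A ∪ B) \ zeroSet x = B := by
      intro A B hA hB
      constructor <;> ext i <;> have := @hA i <;> have := @hB i <;> simp only [mem_union,
        mem_inter, mem_sdiff, mem_compl] at * <;> tauto
    obtain ⟨h1, h2⟩ := hinter hAB.1.1 hAB.2.1
    obtain ⟨h1', h2'⟩ := hinter hAB'.1.1 hAB'.2.1
    rw [Prod.mk.injEq]
    exact ⟨by rw [← h1, hU, h1'], by rw [← h2, hU, h2']⟩
  rw [flipZerosOnes, card_image_of_injOn hinj, card_product, card_powersetCard,
    card_powersetCard, card_compl, Fintype.card_fin]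
  rfl

end FlipBits

theorem powC_nonneg (β : ℝ) (n : ℕ) : 0 ≤ powC β n :=
  sum_nonneg fun i _ => Real.rpow_nonneg i.cast_nonneg _

theorem powC_pos (β : ℝ) {n : ℕ} (hn : 1 ≤ n) : 0 < powC β n :=
  sum_pos (fun i hi => Real.rpow_pos_of_pos (by exact_mod_cast (mem_Icc.mp hi).1) _)
    ⟨1, mem_Icc.mpr ⟨le_rfl, hn⟩⟩

theorem powC_le_tsum {β : ℝ} (hβ : 1 < β) (n : ℕ) : powC β n ≤ ∑' i : ℕ, (i : ℝ) ^ (-β) :=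
  (Real.summable_nat_rpow.mpr (by linarith)).sum_le_tsum _
    fun i _ => Real.rpow_nonneg i.cast_nonneg _

/-- Counts only the offspring that flip `Δ ≤ D` zeros and `k + Δ` ones of the parent, which
needs mutation strength `k + 2Δ`. -/
theorem IsPowerLawMutation.ofReal_sum_le_toOuterMeasure {n : ℕ} {β : ℝ}
    {mutOp : BitString n → PMF (BitString n)} (hmut : IsPowerLawMutation n β mutOp)
    (x : BitString n) {k : ℕ} (hk : 1 ≤ k) (D : ℕ) :
    ENNReal.ofReal (∑ Δ ∈ range (D + 1),
        hypergeom n (zeros x) (k + 2 * Δ) Δ * ((k + 2 * Δ : ℕ) : ℝ) ^ (-β) / powC β n)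
      ≤ (mutOp x).toOuterMeasure {y | zeros y = zeros x + k} := by
  have hF : ∀ Δ, ∀ y ∈ flipZerosOnes x Δ (k + Δ),
      hamming x y = k + 2 * Δ ∧ zeros y = zeros x + k := by
    intro Δ y hy
    obtain ⟨hham, hzeros⟩ := hamming_zeros_of_mem_flipZerosOnes hy
    omega
  have hdisj : (range (D + 1) : Set ℕ).PairwiseDisjoint fun Δ => flipZerosOnes x Δ (k + Δ) := by
    intro a _ b _ hab
    refine disjoint_left.mpr fun y hya hyb => hab ?_
    have := (hF a y hya).1.symm.trans (hF b y hyb).1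
    omega
  have hterm : ∀ Δ ∈ range (D + 1),
      ∑ y ∈ flipZerosOnes x Δ (k + Δ), {y | zeros y = zeros x + k}.indicator (mutOp x) y
        = ENNReal.ofReal
            (hypergeom n (zeros x) (k + 2 * Δ) Δ * ((k + 2 * Δ : ℕ) : ℝ) ^ (-β) / powC β n) := by
    intro Δ _
    have hvalue : ∀ y ∈ flipZerosOnes x Δ (k + Δ),
        {y | zeros y = zeros x + k}.indicator (mutOp x) y = ENNReal.ofReal
          (((k + 2 * Δ : ℕ) : ℝ) ^ (-β) / powC β n / (n.choose (k + 2 * Δ) : ℝ)) := by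
      intro y hy
      obtain ⟨hham, hzeros⟩ := hF Δ y hy
      rw [Set.indicator_of_mem (show y ∈ {y | zeros y = zeros x + k} from hzeros), hmut, hham,
        if_neg (by omega)]
    rw [sum_congr rfl hvalue, sum_const, nsmul_eq_mul, card_flipZerosOnes,
      ← ENNReal.ofReal_natCast, ← ENNReal.ofReal_mul (Nat.cast_nonneg _), hypergeom, hypergeomCount,
      show k + 2 * Δ - Δ = k + Δ by omega]
    congr 1
    ring
  rw [ENNReal.ofReal_sum_of_nonneg fun Δ _ => div_nonneg
      (mul_nonneg (hypergeom_nonneg Δ) (Real.rpow_nonneg (Nat.cast_nonneg _) _))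
      (powC_nonneg β n),
    ← sum_congr rfl hterm, ← sum_biUnion hdisj, PMF.toOuterMeasure_apply]
  exact ENNReal.sum_le_tsum _

/-- Every mutation strength `k + 2Δ` with `Δ ≤ 2k` is at most `5k`. -/
theorem le_sum_diag_hypergeom_mul_rpow {n u k : ℕ} {β C S : ℝ} (hβ : 0 ≤ β) (hC : 0 < C)
    (hCS : C ≤ S) (hk : 1 ≤ k) (h4u : 4 * u ≤ n) (hkn : k + 2 * u ≤ n) :
    3 / 8 * (5 : ℝ) ^ (-β) / S * (k : ℝ) ^ (-β)
      ≤ ∑ Δ ∈ range (min u (2 * k) + 1),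
          hypergeom n u (k + 2 * Δ) Δ * ((k + 2 * Δ : ℕ) : ℝ) ^ (-β) / C := by
  have hmass := three_eighths_le_sum_diag_hypergeom hk h4u hkn
  have hS : 0 < S := hC.trans_le hCS
  calc 3 / 8 * (5 : ℝ) ^ (-β) / S * (k : ℝ) ^ (-β)
      = 3 / 8 * (((5 * k : ℕ) : ℝ) ^ (-β) / S) := by
        rw [Nat.cast_mul, Nat.cast_ofNat, Real.mul_rpow (by norm_num) k.cast_nonneg]
        ring
    _ ≤ (∑ Δ ∈ range (min u (2 * k) + 1), hypergeom n u (k + 2 * Δ) Δ)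
          * (((5 * k : ℕ) : ℝ) ^ (-β) / C) := by gcongr
    _ ≤ _ := by
        rw [sum_mul]
        refine sum_le_sum fun Δ hΔ => ?_
        have hΔ : Δ ≤ 2 * k := by rw [mem_range] at hΔ; omega
        rw [mul_div_assoc]
        refine mul_le_mul_of_nonneg_left (div_le_div_of_nonneg_right ?_ hC.le)
          (hypergeom_nonneg Δ)
        exact Real.rpow_le_rpow_of_nonpos (by norm_cast; omega) (by norm_cast; omega)
          (by linarith)

/-- For a parent `x` with `u := |x|₀ ≤ n/4` zeros and any integer `v` with
`u + 1 ≤ v ≤ n/2 − 1`, the offspring `y` of power-law mutation with exponent `β ∈ (1,2)`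
satisfies `Pr[|y|₀ = v] ≥ c·(v − u)^{−β}`, with `c > 0` depending only on `β`. -/
theorem power_law_transition_prob :
    ∀ β : ℝ, 1 < β → β < 2 →
      ∃ c : ℝ, 0 < c ∧
        ∀ n : ℕ, 1 ≤ n →
          ∀ mutOp : BitString n → PMF (BitString n), IsPowerLawMutation n β mutOp →
            ∀ x : BitString n, (zeros x : ℝ) ≤ (n : ℝ) / 4 →
              ∀ v : ℕ, zeros x + 1 ≤ v → (v : ℝ) ≤ (n : ℝ) / 2 - 1 →
                ENNReal.ofReal (c * ((v : ℝ) - (zeros x : ℝ)) ^ (-β))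
                  ≤ (mutOp x).toOuterMeasure {y | zeros y = v} := by
  intro β hβ1 _
  set S := ∑' i : ℕ, (i : ℝ) ^ (-β)
  have hS : 0 < S := (powC_pos β le_rfl).trans_le (powC_le_tsum hβ1 1)
  refine ⟨3 / 8 * (5 : ℝ) ^ (-β) / S, by positivity, ?_⟩
  intro n hn mutOp hmut x hx v hv hvn
  obtain ⟨k, rfl⟩ : ∃ k, v = zeros x + k := ⟨v - zeros x, by omega⟩
  have h4u : 4 * zeros x ≤ n := by exact_mod_cast (by linarith : (4 * zeros x : ℝ) ≤ n)
  have hkn : k + 2 * zeros x ≤ n := by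
    push_cast at hvn
    exact_mod_cast (by push_cast; linarith : ((k + 2 * zeros x : ℕ) : ℝ) ≤ n)
  calc ENNReal.ofReal (3 / 8 * (5 : ℝ) ^ (-β) / S * (((zeros x + k : ℕ) : ℝ) - zeros x) ^ (-β))
      = ENNReal.ofReal (3 / 8 * (5 : ℝ) ^ (-β) / S * (k : ℝ) ^ (-β)) := by push_cast; ring_nf
    _ ≤ _ := ENNReal.ofReal_le_ofReal <| le_sum_diag_hypergeom_mul_rpow (by linarith)
          (powC_pos β hn) (powC_le_tsum hβ1 n) (by omega) h4u hkn
    _ ≤ _ := hmut.ofReal_sum_le_toOuterMeasure x (by omega) _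

end
end

section
/- Let n ≥ 1 and let (X_t)_{t∈ℕ} be a stochastic process adapted to a filtration (F_t)_{t∈ℕ} taking values in {0, 1, …, n}, and let T = inf{t ∈ ℕ : X_t = 0}. Suppose there is δ > 0 such that for every t ∈ ℕ, almost surely on the event {t < T}, E[X_t − X_{t+1} | F_t] ≥ δ·X_t. Then E[T] ≤ (1 + ln n)/δ. -/
/-!
For the potential `g = logPotential` (`g 0 = 0`, `g k = 1 + log k` for `k ≥ 1`), the inequality
`1 - 1/x ≤ log x` gives `a - b ≤ a (g a - g b)` for all naturals `a, b`. Conditioning on `ℱ t`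
and pulling out `X t`, the multiplicative drift `δ X_t` of `X` becomes an additive drift `δ` of
`g(X_t)` before the hitting time. Since `g ≥ 0`, telescoping the additive drift bounds
`δ ∑_t P(T > t)` by `E[g(X_0)] ≤ 1 + log n`, and `E[T] = ∑_t P(T > t)`.
-/

open MeasureTheory
open scoped ENNReal

noncomputable section

def logPotential (k : ℕ) : ℝ := if k = 0 then 0 else 1 + Real.log k

lemma logPotential_nonneg (k : ℕ) : 0 ≤ logPotential k := by
  unfold logPotential
  split_ifs
  · exact le_rfl
  · linarith [Real.log_natCast_nonneg k]

lemma logPotential_le_of_le {k n : ℕ} (hk : k ≤ n) : logPotential k ≤ 1 + Real.log n := by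
  unfold logPotential
  split_ifs
  · linarith [Real.log_natCast_nonneg n]
  · have : Real.log k ≤ Real.log n := Real.log_le_log (by positivity) (by exact_mod_cast hk)
    linarith

lemma natCast_sub_le_mul_logPotential_sub (a b : ℕ) :
    (a : ℝ) - b ≤ a * (logPotential a - logPotential b) := by
  rcases Nat.eq_zero_or_pos a with rfl | ha
  · simp
  rcases Nat.eq_zero_or_pos b with rfl | hb
  · simp only [logPotential, ha.ne', if_false, if_true, Nat.cast_zero, sub_zero]
    nlinarith [Real.log_natCast_nonneg a, (Nat.one_le_cast (α := ℝ)).2 ha]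
  · have ha' : (0 : ℝ) < a := by exact_mod_cast ha
    have hb' : (0 : ℝ) < b := by exact_mod_cast hb
    have hlog : 1 - (a / b : ℝ)⁻¹ ≤ Real.log a - Real.log b := by
      rw [← Real.log_div ha'.ne' hb'.ne']
      exact Real.one_sub_inv_le_log_of_pos (by positivity)
    simp only [logPotential, ha.ne', hb.ne', if_false]
    calc (a : ℝ) - b = a * (1 - (a / b : ℝ)⁻¹) := by field_simp
      _ ≤ a * (Real.log a - Real.log b) := by gcongr
      _ = a * (1 + Real.log a - (1 + Real.log b)) := by ring

lemma ENat.toENNReal_eq_tsum_ite_lt (k : ℕ∞) :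
    (k : ℝ≥0∞) = ∑' t : ℕ, if (t : ℕ∞) < k then 1 else 0 := by
  induction k using ENat.recTopCoe with
  | top => simp
  | coe m =>
    rw [tsum_eq_sum (s := Finset.range m) (fun t ht => by simpa using ht)]
    simp [Finset.sum_boole, Finset.filter_true_of_mem (fun t ht => Finset.mem_range.1 ht)]

lemma ENat.natCast_lt_iInf_iff {p : ℕ → Prop} {t : ℕ} :
    (t : ℕ∞) < ⨅ (u : ℕ) (_ : p u), (u : ℕ∞) ↔ ∀ u ≤ t, ¬ p u := by
  rw [← ENat.add_one_le_iff (ENat.natCast_ne_top t)]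
  simp only [le_iInf_iff]
  norm_cast
  grind

lemma sInf_natCast_eq_toENNReal_iInf (p : ℕ → Prop) :
    sInf {r : ℝ≥0∞ | ∃ t : ℕ, p t ∧ r = t} = ((⨅ (t : ℕ) (_ : p t), (t : ℕ∞) : ℕ∞) : ℝ≥0∞) := by
  have : {r : ℝ≥0∞ | ∃ t : ℕ, p t ∧ r = t} = Nat.cast '' {t | p t} := by
    ext
    simp [eq_comm]
  rw [this, sInf_image]
  simp

lemma natCast_lt_sInf_natCast_iff {p : ℕ → Prop} {t : ℕ} :
    (t : ℝ≥0∞) < sInf {r : ℝ≥0∞ | ∃ u : ℕ, p u ∧ r = u} ↔ ∀ u ≤ t, ¬ p u := by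
  rw [sInf_natCast_eq_toENNReal_iInf, ← ENat.toENNReal_coe, ENat.toENNReal_lt,
    ENat.natCast_lt_iInf_iff]

section HittingTime

variable {Ω : Type*} {m0 : MeasurableSpace Ω} (μ : Measure Ω)

lemma lintegral_toENNReal_eq_tsum_measure_lt {τ : Ω → ℕ∞}
    (hτ : ∀ t : ℕ, MeasurableSet {ω | (t : ℕ∞) < τ ω}) :
    ∫⁻ ω, (τ ω : ℝ≥0∞) ∂μ = ∑' t : ℕ, μ {ω | (t : ℕ∞) < τ ω} := by
  simp_rw [ENat.toENNReal_eq_tsum_ite_lt]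
  rw [lintegral_tsum fun t => (measurable_const.ite (hτ t) measurable_const).aemeasurable]
  congr! with t
  rw [← lintegral_indicator_one (hτ t)]
  simp [Set.indicator_apply]

lemma lintegral_sInf_natCast_eq_tsum_measure {p : ℕ → Ω → Prop}
    (hp : ∀ t : ℕ, MeasurableSet {ω | ∀ u ≤ t, ¬ p u ω}) :
    ∫⁻ ω, sInf {r : ℝ≥0∞ | ∃ t : ℕ, p t ω ∧ r = t} ∂μ = ∑' t : ℕ, μ {ω | ∀ u ≤ t, ¬ p u ω} := by
  simp_rw [sInf_natCast_eq_toENNReal_iInf]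
  rw [lintegral_toENNReal_eq_tsum_measure_lt]
  · simp only [ENat.natCast_lt_iInf_iff]
  · simpa only [ENat.natCast_lt_iInf_iff] using hp

end HittingTime

section Drift

variable {Ω : Type*} {m m0 : MeasurableSpace Ω} {μ : Measure Ω} [IsFiniteMeasure μ]

lemma integrable_comp_of_forall_le {Z : Ω → ℕ} (hZ : Measurable Z) {n : ℕ} (hZn : ∀ ω, Z ω ≤ n)
    (f : ℕ → ℝ) : Integrable (fun ω => f (Z ω)) μ :=
  .of_bound (measurable_from_nat.comp hZ).aestronglyMeasurable (∑ k ∈ Finset.range (n + 1), |f k|)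
    (.of_forall fun ω => Finset.single_le_sum (f := fun k => |f k|) (fun _ _ => abs_nonneg _)
      (Finset.mem_range.2 (Nat.lt_succ_of_le (hZn ω))))

lemma ae_le_condExp_logPotential_sub (hm : m ≤ m0) {Z Z' : Ω → ℕ} (hZ : Measurable[m] Z)
    (hZ' : Measurable Z') {n : ℕ} (hZn : ∀ ω, Z ω ≤ n) (hZ'n : ∀ ω, Z' ω ≤ n) {A : Set Ω}
    (hA : ∀ ω ∈ A, Z ω ≠ 0) {δ : ℝ}
    (hdrift : ∀ᵐ ω ∂μ, ω ∈ A → δ * Z ω ≤ μ[fun ω => (Z ω : ℝ) - Z' ω | m] ω) :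
    ∀ᵐ ω ∂μ, ω ∈ A → δ ≤ μ[fun ω => logPotential (Z ω) - logPotential (Z' ω) | m] ω := by
  set G := fun ω => logPotential (Z ω) - logPotential (Z' ω)
  have hZ₀ : Measurable Z := hZ.mono hm le_rfl
  have hZ_int (f : ℕ → ℝ) : Integrable (fun ω => f (Z ω)) μ :=
    integrable_comp_of_forall_le hZ₀ hZn f
  have hZ'_int (f : ℕ → ℝ) : Integrable (fun ω => f (Z' ω)) μ :=
    integrable_comp_of_forall_le hZ' hZ'n f
  have hG : Integrable G μ := (hZ_int _).sub (hZ'_int _)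
  have hZG : Integrable ((fun ω => (Z ω : ℝ)) * G) μ :=
    hG.bdd_mul (c := n) (measurable_from_nat.comp hZ₀).aestronglyMeasurable
      (.of_forall fun ω => by simpa using hZn ω)
  have hmono : μ[fun ω => (Z ω : ℝ) - Z' ω | m] ≤ᵐ[μ] μ[(fun ω => (Z ω : ℝ)) * G | m] :=
    condExp_mono ((hZ_int _).sub (hZ'_int _)) hZG
      (.of_forall fun ω => natCast_sub_le_mul_logPotential_sub (Z ω) (Z' ω))
  have hpull : μ[(fun ω => (Z ω : ℝ)) * G | m] =ᵐ[μ] (fun ω => (Z ω : ℝ)) * μ[G | m] :=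
    condExp_mul_of_stronglyMeasurable_left (measurable_from_nat.comp hZ).stronglyMeasurable hZG hG
  filter_upwards [hdrift, hmono, hpull] with ω hδZ hle heq hωA
  have hZpos : (0 : ℝ) < Z ω := Nat.cast_pos.2 (Nat.pos_of_ne_zero (hA ω hωA))
  refine le_of_mul_le_mul_right ?_ hZpos
  calc δ * Z ω ≤ _ := (hδZ hωA).trans hle
    _ = _ := by rw [heq, Pi.mul_apply, mul_comm]

lemma mul_measureReal_le_setIntegral_sub_of_condExp (hm : m ≤ m0) {Y Y' : Ω → ℝ}
    (hY : Integrable Y μ) (hY' : Integrable Y' μ) {A : Set Ω} (hA : MeasurableSet[m] A) {δ : ℝ}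
    (hdrift : ∀ᵐ ω ∂μ, ω ∈ A → δ ≤ μ[Y - Y' | m] ω) :
    δ * μ.real A ≤ ∫ ω in A, Y ω ∂μ - ∫ ω in A, Y' ω ∂μ :=
  calc δ * μ.real A = ∫ _ in A, δ ∂μ := by rw [setIntegral_const, smul_eq_mul, mul_comm]
    _ ≤ ∫ ω in A, μ[Y - Y' | m] ω ∂μ :=
      setIntegral_mono_ae_restrict (integrableOn_const (measure_ne_top μ A))
        integrable_condExp.integrableOn ((ae_restrict_iff' (hm A hA)).2 hdrift)
    _ = ∫ ω in A, (Y - Y') ω ∂μ := setIntegral_condExp hm (hY.sub hY') hA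
    _ = ∫ ω in A, Y ω ∂μ - ∫ ω in A, Y' ω ∂μ := integral_sub hY.integrableOn hY'.integrableOn

variable (ℱ : Filtration ℕ m0) {Y : ℕ → Ω → ℝ} (hY : ∀ t, Integrable (Y t) μ)
  (hY_nonneg : ∀ t, 0 ≤ Y t) {A : ℕ → Set Ω} (hA : ∀ t, MeasurableSet[ℱ t] (A t))
  (hA_anti : Antitone A) {δ : ℝ}
  (hdrift : ∀ t, ∀ᵐ ω ∂μ, ω ∈ A t → δ ≤ μ[Y t - Y (t + 1) | ℱ t] ω)
include hY hY_nonneg hA hA_anti hdrift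

theorem mul_sum_measureReal_le_of_additive_drift (N : ℕ) :
    δ * ∑ t ∈ Finset.range N, μ.real (A t) ≤ ∫ ω in A 0, Y 0 ω ∂μ - ∫ ω in A N, Y N ω ∂μ := by
  have hstep (t : ℕ) :
      δ * μ.real (A t) ≤ ∫ ω in A t, Y t ω ∂μ - ∫ ω in A (t + 1), Y (t + 1) ω ∂μ :=
    calc δ * μ.real (A t) ≤ ∫ ω in A t, Y t ω ∂μ - ∫ ω in A t, Y (t + 1) ω ∂μ :=
          mul_measureReal_le_setIntegral_sub_of_condExp (ℱ.le t) (hY t) (hY (t + 1)) (hA t)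
            (hdrift t)
      _ ≤ _ := sub_le_sub_left (setIntegral_mono_set (hY (t + 1)).integrableOn
          (.of_forall (hY_nonneg (t + 1))) (hA_anti t.le_succ).eventuallyLE) _
  rw [Finset.mul_sum, ← Finset.sum_range_sub' (fun t => ∫ ω in A t, Y t ω ∂μ)]
  exact Finset.sum_le_sum fun t _ => hstep t

theorem tsum_measure_le_of_additive_drift (hδ : 0 < δ) :
    ∑' t, μ (A t) ≤ ENNReal.ofReal ((∫ ω, Y 0 ω ∂μ) / δ) := by
  refine ENNReal.tsum_le_of_sum_range_le fun N => ?_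
  rw [ENNReal.le_ofReal_iff_toReal_le (by simp [measure_ne_top])
      (div_nonneg (integral_nonneg (hY_nonneg 0)) hδ.le),
    ENNReal.toReal_sum (by simp [measure_ne_top]), le_div_iff₀' hδ]
  calc δ * ∑ t ∈ Finset.range N, μ.real (A t)
      ≤ ∫ ω in A 0, Y 0 ω ∂μ - ∫ ω in A N, Y N ω ∂μ :=
        mul_sum_measureReal_le_of_additive_drift ℱ hY hY_nonneg hA hA_anti hdrift N
    _ ≤ ∫ ω, Y 0 ω ∂μ := by
      have := setIntegral_nonneg (μ := μ) (ℱ.le N _ (hA N)) fun ω _ => hY_nonneg N ω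
      linarith [setIntegral_le_integral (s := A 0) (hY 0) (.of_forall (hY_nonneg 0))]

end Drift

theorem multiplicative_drift_expectation_general
    {Ω : Type*} {m0 : MeasurableSpace Ω} (μ : Measure Ω) [IsProbabilityMeasure μ]
    (ℱ : Filtration ℕ m0) (n : ℕ)
    (X : ℕ → Ω → ℕ)
    (hadapted : ∀ t, Measurable[ℱ t] (X t))
    (hbounded : ∀ t ω, X t ω ≤ n)
    (T : Ω → ℝ≥0∞)
    (hT : T = fun ω => sInf {s : ℝ≥0∞ | ∃ t : ℕ, X t ω = 0 ∧ s = (t : ℝ≥0∞)})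
    (δ : ℝ) (hδ : 0 < δ)
    (hdrift : ∀ t : ℕ, ∀ᵐ ω ∂μ, (t : ℝ≥0∞) < T ω →
      δ * (X t ω : ℝ)
        ≤ (μ[fun ω' => (X t ω' : ℝ) - (X (t + 1) ω' : ℝ) | ℱ t]) ω) :
    ∫⁻ ω, T ω ∂μ ≤ ENNReal.ofReal ((1 + Real.log n) / δ) := by
  set E : ℕ → Set Ω := fun t => {ω | ∀ u ≤ t, ¬ X u ω = 0}
  have hE (t : ℕ) : MeasurableSet[ℱ t] (E t) := by
    simp only [E, Set.ofPred_forall]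
    exact .iInter fun u => .iInter fun hu =>
      (ℱ.mono hu _ (hadapted u (measurableSet_singleton 0))).compl
  have hX (t : ℕ) : Measurable (X t) := (hadapted t).mono (ℱ.le t) le_rfl
  have hgX (t : ℕ) : Integrable (fun ω => logPotential (X t ω)) μ :=
    integrable_comp_of_forall_le (hX t) (hbounded t) _
  have hgX_drift (t : ℕ) : ∀ᵐ ω ∂μ, ω ∈ E t →
      δ ≤ μ[fun ω => logPotential (X t ω) - logPotential (X (t + 1) ω) | ℱ t] ω := by
    refine ae_le_condExp_logPotential_sub (ℱ.le t) (hadapted t) (hX (t + 1)) (hbounded t)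
      (hbounded (t + 1)) (fun ω (hω : ∀ u ≤ t, ¬ X u ω = 0) => hω t le_rfl) ?_
    filter_upwards [hdrift t] with ω hω hωE
    exact hω (by rw [hT]; exact natCast_lt_sInf_natCast_iff.2 hωE)
  calc ∫⁻ ω, T ω ∂μ = ∑' t, μ (E t) := by
        rw [hT]
        exact lintegral_sInf_natCast_eq_tsum_measure μ fun t => ℱ.le t _ (hE t)
    _ ≤ ENNReal.ofReal ((∫ ω, logPotential (X 0 ω) ∂μ) / δ) :=
      tsum_measure_le_of_additive_drift ℱ hgX (fun t ω => logPotential_nonneg _) hE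
        (fun s t hst ω hω u hu => hω u (hu.trans hst)) hgX_drift hδ
    _ ≤ ENNReal.ofReal ((1 + Real.log n) / δ) := by
      gcongr
      calc ∫ ω, logPotential (X 0 ω) ∂μ ≤ ∫ _, (1 + Real.log n) ∂μ :=
            integral_mono (hgX 0) (integrable_const _)
              fun ω => logPotential_le_of_le (hbounded 0 ω)
        _ = 1 + Real.log n := by simp

/-- multiplicative drift, expectation version: Let `(X_t)` be a process
adapted to a filtration `ℱ`, with values in `{0, …, n}`, and let
`T = inf{t : X_t = 0}` (as an element of `ℝ≥0∞`, with `T = ∞` if `X` never hits `0`).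
If there is `δ > 0` such that for every `t`, almost surely on `{t < T}`,
`E[X_t − X_{t+1} | ℱ_t] ≥ δ·X_t`, then `E[T] ≤ (1 + ln n)/δ`. -/
theorem multiplicative_drift_expectation
    {Ω : Type*} {m0 : MeasurableSpace Ω} (μ : Measure Ω) [IsProbabilityMeasure μ]
    (ℱ : Filtration ℕ m0) (n : ℕ) (hn : 1 ≤ n)
    (X : ℕ → Ω → ℕ)
    (hadapted : ∀ t, Measurable[ℱ t] (X t))
    (hbounded : ∀ t ω, X t ω ≤ n)
    (T : Ω → ℝ≥0∞)
    (hT : T = fun ω => sInf {s : ℝ≥0∞ | ∃ t : ℕ, X t ω = 0 ∧ s = (t : ℝ≥0∞)})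
    (δ : ℝ) (hδ : 0 < δ)
    (hdrift : ∀ t : ℕ, ∀ᵐ ω ∂μ, (t : ℝ≥0∞) < T ω →
      δ * (X t ω : ℝ)
        ≤ (μ[fun ω' => (X t ω' : ℝ) - (X (t + 1) ω' : ℝ) | ℱ t]) ω) :
    ∫⁻ ω, T ω ∂μ ≤ ENNReal.ofReal ((1 + Real.log n) / δ) :=
  multiplicative_drift_expectation_general μ ℱ n X hadapted hbounded T hT δ hδ hdrift

end
end

section
/- Let m ≥ 1 be an integer, let p_1, …, p_m ∈ (0, 1], and let X_1, …, X_m be independent random variables such that X_i is geometrically distributed on {1, 2, 3, …} with success probability p_i, i.e., Pr[X_i = j] = (1 − p_i)^{j−1}·p_i for all j ≥ 1. Let Y = X_1 + ⋯ + X_m. Then for every real r ≥ 1, Pr[Y ≥ r·E[Y]] ≤ r·e^{1−r}. -/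
/-!
Chernoff's method, as in Janson's tail bound for sums of geometric variables. For `t < p` a
geometric variable with parameter `p` has `E[e^{tX}] = e^t p / (1 - e^t (1 - p)) ≤ p / (p - t)`,
the inequality being `e^t (1 - t) ≤ 1`. Take `t = q (1 - 1/r)` with `q = min pᵢ`: Bernoulli's
inequality `(1/r)^s ≤ 1 - s (1 - 1/r)` for `s = q / pᵢ ∈ (0, 1]` bounds each factor
`pᵢ / (pᵢ - t)` by `r^{q/pᵢ}`, so Markov's inequality for `e^{tY}` gives
`Pr[Y ≥ r E[Y]] ≤ exp(-q E[Y] (r - 1 - log r))`. Finally `q E[Y] ≥ 1`, `r - 1 - log r ≥ 0` and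
`exp(-(r - 1 - log r)) = r e^{1-r}`.
-/

open MeasureTheory ProbabilityTheory Real
open scoped ENNReal

lemma lintegral_comp_eq_tsum_measure_fiber {Ω : Type*} [MeasurableSpace Ω] {μ : Measure Ω}
    {X : Ω → ℕ} (hX : Measurable X) (f : ℕ → ℝ≥0∞) :
    ∫⁻ ω, f (X ω) ∂μ = ∑' n, f n * μ {ω | X ω = n} := by
  rw [← lintegral_map measurable_from_top hX, lintegral_countable']
  refine tsum_congr fun n => ?_
  rw [Measure.map_apply hX (measurableSet_singleton n)]
  rfl

lemma exp_mul_one_sub_le_one (t : ℝ) : exp t * (1 - t) ≤ 1 :=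
  calc exp t * (1 - t) ≤ exp t * exp (-t) := by gcongr; exact one_sub_le_exp_neg t
    _ = 1 := by rw [← exp_add, add_neg_cancel, exp_zero]

lemma inv_one_sub_mul_one_sub_inv_le_rpow {r s : ℝ} (hr : 0 < r) (hs0 : 0 ≤ s) (hs1 : s ≤ 1) :
    (1 - s * (1 - r⁻¹))⁻¹ ≤ r ^ s := by
  have hbernoulli : (r⁻¹) ^ s ≤ 1 - s * (1 - r⁻¹) := by
    have h := rpow_one_add_le_one_add_mul_self (s := r⁻¹ - 1) (by linarith [inv_pos.2 hr]) hs0 hs1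
    rw [add_sub_cancel] at h
    linarith
  rw [inv_rpow hr.le] at hbernoulli
  simpa using inv_anti₀ (by positivity) hbernoulli

section Geometric

variable {Ω : Type*} [MeasurableSpace Ω] {μ : Measure Ω} [IsProbabilityMeasure μ]
  {X : Ω → ℕ} {p : ℝ}

lemma tsum_ofReal_geometric_mul (hp0 : 0 < p) (hp1 : p ≤ 1) :
    ∑' k : ℕ, ENNReal.ofReal ((1 - p) ^ k * p) = 1 := by
  have h := (hasSum_geometric_of_lt_one (sub_nonneg.2 hp1) (sub_lt_self 1 hp0)).mul_right p
  rw [sub_sub_cancel, inv_mul_cancel₀ hp0.ne'] at h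
  rw [← ENNReal.ofReal_tsum_of_nonneg (fun k => by positivity) h.summable, h.tsum_eq,
    ENNReal.ofReal_one]

lemma measure_eq_zero_of_geometric (hX : Measurable X) (hp0 : 0 < p) (hp1 : p ≤ 1)
    (hgeom : ∀ k : ℕ, μ {ω | X ω = k + 1} = ENNReal.ofReal ((1 - p) ^ k * p)) :
    μ {ω | X ω = 0} = 0 := by
  have htotal : ∑' n, μ {ω | X ω = n} = 1 := by
    simpa using (lintegral_comp_eq_tsum_measure_fiber (μ := μ) hX 1).symm
  rw [tsum_eq_zero_add' ENNReal.summable] at htotal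
  simp only [hgeom, tsum_ofReal_geometric_mul hp0 hp1] at htotal
  exact (ENNReal.add_left_inj ENNReal.one_ne_top).1 (htotal.trans (zero_add 1).symm)

lemma lintegral_exp_mul_of_geometric (hX : Measurable X) (hp0 : 0 < p) (hp1 : p ≤ 1)
    (hgeom : ∀ k : ℕ, μ {ω | X ω = k + 1} = ENNReal.ofReal ((1 - p) ^ k * p))
    {t : ℝ} (ht : exp t * (1 - p) < 1) :
    ∫⁻ ω, ENNReal.ofReal (exp (t * X ω)) ∂μ
      = ENNReal.ofReal (exp t * p / (1 - exp t * (1 - p))) := by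
  have hratio : 0 ≤ exp t * (1 - p) := mul_nonneg (exp_pos t).le (sub_nonneg.2 hp1)
  have hterm (k : ℕ) : ENNReal.ofReal (exp (t * (k + 1 : ℕ))) * μ {ω | X ω = k + 1}
      = ENNReal.ofReal (exp t * p * (exp t * (1 - p)) ^ k) := by
    rw [hgeom, ← ENNReal.ofReal_mul (exp_pos _).le, Nat.cast_succ, mul_add_one, exp_add,
      mul_comm t, exp_nat_mul, mul_pow]
    congr 1
    ring
  rw [(lintegral_comp_eq_tsum_measure_fiber hX fun n => ENNReal.ofReal (exp (t * n))).trans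
      (tsum_eq_zero_add' ENNReal.summable), measure_eq_zero_of_geometric hX hp0 hp1 hgeom,
    mul_zero, zero_add]
  simp only [hterm]
  rw [← ENNReal.ofReal_tsum_of_nonneg (fun k => by positivity)
      ((summable_geometric_of_lt_one hratio ht).mul_left _),
    tsum_mul_left, tsum_geometric_of_lt_one hratio ht, div_eq_mul_inv]

lemma lintegral_exp_mul_le_of_geometric (hX : Measurable X) (hp0 : 0 < p) (hp1 : p ≤ 1)
    (hgeom : ∀ k : ℕ, μ {ω | X ω = k + 1} = ENNReal.ofReal ((1 - p) ^ k * p))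
    {t : ℝ} (ht : t < p) :
    ∫⁻ ω, ENNReal.ofReal (exp (t * X ω)) ∂μ ≤ ENNReal.ofReal (p / (p - t)) := by
  have hdecay := exp_mul_one_sub_le_one t
  have hratio : exp t * (1 - p) < 1 := by nlinarith [exp_pos t]
  rw [lintegral_exp_mul_of_geometric hX hp0 hp1 hgeom hratio]
  refine ENNReal.ofReal_le_ofReal ?_
  rw [div_le_div_iff₀ (by linarith) (by linarith)]
  nlinarith [mul_le_mul_of_nonneg_left hdecay hp0.le]

lemma integrable_exp_mul_of_geometric (hX : Measurable X) (hp0 : 0 < p) (hp1 : p ≤ 1)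
    (hgeom : ∀ k : ℕ, μ {ω | X ω = k + 1} = ENNReal.ofReal ((1 - p) ^ k * p))
    {t : ℝ} (ht : t < p) :
    Integrable (fun ω => exp (t * X ω)) μ := by
  refine ⟨by fun_prop, (hasFiniteIntegral_iff_ofReal (ae_of_all _ fun _ => (exp_pos _).le)).2 ?_⟩
  exact (lintegral_exp_mul_le_of_geometric hX hp0 hp1 hgeom ht).trans_lt ENNReal.ofReal_lt_top

lemma mgf_le_of_geometric (hX : Measurable X) (hp0 : 0 < p) (hp1 : p ≤ 1)
    (hgeom : ∀ k : ℕ, μ {ω | X ω = k + 1} = ENNReal.ofReal ((1 - p) ^ k * p))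
    {t : ℝ} (ht : t < p) :
    mgf (fun ω => (X ω : ℝ)) μ t ≤ p / (p - t) := by
  rw [mgf, integral_eq_lintegral_of_nonneg_ae (ae_of_all _ fun _ => (exp_pos _).le) (by fun_prop)]
  exact ENNReal.toReal_le_of_le_ofReal (div_nonneg hp0.le (by linarith))
    (lintegral_exp_mul_le_of_geometric hX hp0 hp1 hgeom ht)

end Geometric

theorem measureReal_sum_ge_le_exp_of_geometric {ι Ω : Type*} [Fintype ι] [MeasurableSpace Ω]
    {μ : Measure Ω} [IsProbabilityMeasure μ] {X : ι → Ω → ℕ} {p : ι → ℝ}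
    (hX : ∀ i, Measurable (X i)) (hindep : iIndepFun X μ) (hp1 : ∀ i, p i ≤ 1)
    (hgeom : ∀ i, ∀ k : ℕ, μ {ω | X i ω = k + 1} = ENNReal.ofReal ((1 - p i) ^ k * p i))
    {q : ℝ} (hq : 0 < q) (hqp : ∀ i, q ≤ p i) {r : ℝ} (hr : 1 ≤ r) :
    μ.real {ω | r * ∑ i, 1 / p i ≤ ∑ i, (X i ω : ℝ)}
      ≤ exp (-(q * ∑ i, 1 / p i) * (r - 1 - log r)) := by
  have hr0 : 0 < r := by linarith
  have hp0 (i : ι) : 0 < p i := hq.trans_le (hqp i)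
  set M := ∑ i, 1 / p i
  set t := q * (1 - r⁻¹) with ht
  have ht0 : 0 ≤ t := mul_nonneg hq.le (sub_nonneg.2 (inv_le_one_of_one_le₀ hr))
  have htp (i : ι) : t < p i := by
    have := inv_pos.2 hr0
    nlinarith [hqp i]
  set Y : ι → Ω → ℝ := fun i ω => X i ω
  have hY (i : ι) : Measurable (Y i) := measurable_from_top.comp (hX i)
  have hYindep : iIndepFun Y μ := hindep.comp _ fun _ => measurable_from_top
  have hfactor (i : ι) : p i / (p i - t) ≤ r ^ (q / p i) := by
    have hrw : p i / (p i - t) = (1 - q / p i * (1 - r⁻¹))⁻¹ := by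
      rw [div_mul_eq_mul_div, one_sub_div (hp0 i).ne', inv_div]
    rw [hrw]
    exact inv_one_sub_mul_one_sub_inv_le_rpow hr0 (div_nonneg hq.le (hp0 i).le)
      ((div_le_one (hp0 i)).2 (hqp i))
  have hmgf : mgf (∑ i, Y i) μ t ≤ exp (q * M * log r) :=
    calc mgf (∑ i, Y i) μ t = ∏ i, mgf (Y i) μ t := hYindep.mgf_sum hY _
      _ ≤ ∏ i, p i / (p i - t) := Finset.prod_le_prod (fun _ _ => mgf_nonneg)
          fun i _ => mgf_le_of_geometric (hX i) (hp0 i) (hp1 i) (hgeom i) (htp i)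
      _ ≤ ∏ i, r ^ (q / p i) := Finset.prod_le_prod
          (fun i _ => div_nonneg (hp0 i).le (sub_pos.2 (htp i)).le) fun i _ => hfactor i
      _ = exp (q * M * log r) := by
          simp only [rpow_def_of_pos hr0, ← exp_sum, M, Finset.mul_sum, Finset.sum_mul]
          exact congrArg exp (Finset.sum_congr rfl fun i _ => by ring)
  have hchernoff := measure_ge_le_exp_mul_mgf (r * M) ht0
    (hYindep.integrable_exp_mul_sum hY (s := Finset.univ) fun i _ =>
      integrable_exp_mul_of_geometric (hX i) (hp0 i) (hp1 i) (hgeom i) (htp i))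
  calc μ.real {ω | r * M ≤ ∑ i, (X i ω : ℝ)}
      = μ.real {ω | r * M ≤ (∑ i, Y i) ω} := by simp only [Finset.sum_apply, Y]
    _ ≤ exp (-t * (r * M)) * exp (q * M * log r) := hchernoff.trans (by gcongr)
    _ = exp (-(q * M) * (r - 1 - log r)) := by
        rw [← exp_add, ht]
        congr 1
        field_simp
        ring

/-- If `X_1, …, X_m` are independent geometric random variables on
`{1, 2, …}` with success probabilities `p_1, …, p_m ∈ (0, 1]` and `Y = X_1 + ⋯ + X_m`
(so `E[Y] = ∑ 1/p_i`), then for every `r ≥ 1`, `Pr[Y ≥ r·E[Y]] ≤ r·e^{1−r}`. -/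
theorem sum_of_geometrics_tail
    {Ω : Type*} [MeasurableSpace Ω] (μ : Measure Ω) [IsProbabilityMeasure μ]
    (m : ℕ) (hm : 1 ≤ m)
    (p : Fin m → ℝ) (hp0 : ∀ i, 0 < p i) (hp1 : ∀ i, p i ≤ 1)
    (X : Fin m → Ω → ℕ)
    (hmeas : ∀ i, Measurable (X i))
    (hindep : ProbabilityTheory.iIndepFun X μ)
    (hgeom : ∀ i, ∀ j : ℕ, 1 ≤ j →
      μ {ω | X i ω = j} = ENNReal.ofReal ((1 - p i) ^ (j - 1) * p i)) :
    ∀ r : ℝ, 1 ≤ r →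
      μ {ω | r * (∑ i, 1 / p i) ≤ ((∑ i, X i ω : ℕ) : ℝ)}
        ≤ ENNReal.ofReal (r * Real.exp (1 - r)) := by
  intro r hr
  obtain ⟨i₀, -, hi₀⟩ := Finset.exists_min_image Finset.univ p ⟨⟨0, hm⟩, Finset.mem_univ _⟩
  have hgeom' (i : Fin m) (k : ℕ) :
      μ {ω | X i ω = k + 1} = ENNReal.ofReal ((1 - p i) ^ k * p i) := by
    simpa using hgeom i (k + 1) (by omega)
  have htail := measureReal_sum_ge_le_exp_of_geometric hmeas hindep hp1 hgeom' (hp0 i₀)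
    (fun i => hi₀ i (Finset.mem_univ i)) hr
  have hmin_mul_mean : 1 ≤ p i₀ * ∑ i, 1 / p i :=
    calc 1 = p i₀ * (1 / p i₀) := (mul_one_div_cancel (hp0 i₀).ne').symm
      _ ≤ p i₀ * ∑ i, 1 / p i := mul_le_mul_of_nonneg_left
          (Finset.single_le_sum (fun i _ => (one_div_pos.2 (hp0 i)).le) (Finset.mem_univ i₀))
          (hp0 i₀).le
  have hgap : 0 ≤ r - 1 - log r := by linarith [log_le_sub_one_of_pos (by linarith : 0 < r)]
  calc μ {ω | r * (∑ i, 1 / p i) ≤ ((∑ i, X i ω : ℕ) : ℝ)}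
      = ENNReal.ofReal (μ.real {ω | r * ∑ i, 1 / p i ≤ ∑ i, (X i ω : ℝ)}) := by
        rw [ofReal_measureReal]
        simp only [Nat.cast_sum]
    _ ≤ ENNReal.ofReal (exp (-(r - 1 - log r))) := by
        refine ENNReal.ofReal_le_ofReal (htail.trans (exp_le_exp.2 ?_))
        nlinarith
    _ = ENNReal.ofReal (r * exp (1 - r)) := by
        rw [show -(r - 1 - log r) = log r + (1 - r) by ring, exp_add, exp_log (by linarith)]
end

section
/- Let n ∈ ℕ, let p ∈ (0, 1], and let X_0, …, X_n be ℕ-valued random variables on a common probability space (not necessarily independent) such that for every u ∈ [0..n] and every t ∈ ℕ it holds that Pr[X_u > t] ≤ (1 − p)^t. Then E[max_{u ∈ [0..n]} X_u] ≤ (ln(n + 1) + 2)/p. -/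
/-!
By the union bound, `Pr[max_u X_u > t] ≤ min(1, (n + 1)(1 - p)^t)`. Summing these tails, the
first `T = ⌈ln(n + 1)/p⌉` terms contribute at most `T`, and the rest form a geometric series of
sum at most `(n + 1)(1 - p)^T / p ≤ 1/p`, because `(1 - p)^T ≤ e^{-pT} ≤ 1/(n + 1)`.
-/

open MeasureTheory
open scoped ENNReal

/-- `f` need not be measurable: its level sets are replaced by measurable hulls. -/
theorem lintegral_natCast_le_tsum_measure_lt {Ω : Type*} [MeasurableSpace Ω] (μ : Measure Ω)
    (f : Ω → ℕ) : ∫⁻ ω, (f ω : ℝ≥0∞) ∂μ ≤ ∑' t : ℕ, μ {ω | t < f ω} := by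
  set A : ℕ → Set Ω := fun t => toMeasurable μ {ω | t < f ω}
  have hA : ∀ t, MeasurableSet (A t) := fun t => measurableSet_toMeasurable μ _
  have hf : ∀ ω, (f ω : ℝ≥0∞) ≤ ∑' t, (A t).indicator 1 ω := fun ω =>
    calc (f ω : ℝ≥0∞) = ∑' t, {ω | t < f ω}.indicator 1 ω := by
          rw [tsum_eq_sum (s := Finset.range (f ω)) fun t ht => by simpa using ht]
          simp [Set.indicator_apply, Finset.filter_true_of_mem fun t ht => Finset.mem_range.mp ht]
      _ ≤ ∑' t, (A t).indicator 1 ω := ENNReal.tsum_le_tsum fun t =>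
          Set.indicator_le_indicator_of_subset (subset_toMeasurable μ _) (fun _ => zero_le) ω
  calc ∫⁻ ω, (f ω : ℝ≥0∞) ∂μ ≤ ∫⁻ ω, ∑' t, (A t).indicator 1 ω ∂μ := lintegral_mono hf
    _ = ∑' t, μ (A t) := by
        rw [lintegral_tsum fun t => (measurable_one.indicator (hA t)).aemeasurable]
        simp only [lintegral_indicator_one (hA _)]
    _ = ∑' t : ℕ, μ {ω | t < f ω} := by simp only [A, measure_toMeasurable]

theorem measure_lt_finset_sup_le_sum {Ω ι : Type*} [MeasurableSpace Ω] (μ : Measure Ω)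
    (s : Finset ι) (X : ι → Ω → ℕ) (t : ℕ) :
    μ {ω | t < s.sup fun u => X u ω} ≤ ∑ u ∈ s, μ {ω | t < X u ω} := by
  have hunion : {ω | t < s.sup fun u => X u ω} = ⋃ u ∈ s, {ω | t < X u ω} := by
    ext ω; simp [Finset.lt_sup_iff]
  exact hunion ▸ measure_biUnion_finset_le s _

theorem ENNReal.tsum_le_add_inv_one_sub_of_le_mul_pow {a : ℕ → ℝ≥0∞} {C r : ℝ≥0∞} {T : ℕ}
    (ha1 : ∀ t, a t ≤ 1) (haC : ∀ t, a t ≤ C * r ^ t) (hT : C * r ^ T ≤ 1) :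
    ∑' t, a t ≤ T + (1 - r)⁻¹ := by
  rw [← ENNReal.summable.sum_add_tsum_nat_add' (k := T)]
  gcongr
  · calc ∑ t ∈ Finset.range T, a t ≤ ∑ _t ∈ Finset.range T, 1 :=
          Finset.sum_le_sum fun t _ => ha1 t
      _ = T := by simp
  · calc ∑' t, a (t + T) ≤ ∑' t, C * r ^ T * r ^ t := ENNReal.tsum_le_tsum fun t => by
          rw [mul_assoc, ← pow_add, add_comm T]; exact haC _
      _ = C * r ^ T * (1 - r)⁻¹ := by rw [ENNReal.tsum_mul_left, ENNReal.tsum_geometric]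
      _ ≤ (1 - r)⁻¹ := by simpa using mul_le_mul_left hT (1 - r)⁻¹

theorem mul_one_sub_pow_natCeil_log_div_le_one {p c : ℝ} (hp0 : 0 < p) (hp1 : p ≤ 1)
    (hc : 0 < c) : c * (1 - p) ^ ⌈Real.log c / p⌉₊ ≤ 1 := by
  set T := ⌈Real.log c / p⌉₊
  have hlogT : Real.log c ≤ p * T := (div_le_iff₀' hp0).mp (Nat.le_ceil _)
  have hpow : (1 - p) ^ T ≤ c⁻¹ :=
    calc (1 - p) ^ T ≤ Real.exp (-p) ^ T :=
          pow_le_pow_left₀ (by linarith) (by linarith [Real.add_one_le_exp (-p)]) T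
      _ = Real.exp (-(p * T)) := by rw [← Real.exp_nat_mul]; ring_nf
      _ ≤ Real.exp (-Real.log c) := Real.exp_le_exp.mpr (by linarith)
      _ = c⁻¹ := by rw [Real.exp_neg, Real.exp_log hc]
  calc c * (1 - p) ^ T ≤ c * c⁻¹ := mul_le_mul_of_nonneg_left hpow hc.le
    _ = 1 := mul_inv_cancel₀ hc.ne'

theorem natCeil_log_div_add_inv_le {p c : ℝ} (hp0 : 0 < p) (hp1 : p ≤ 1) (hc : 1 ≤ c) :
    (⌈Real.log c / p⌉₊ : ℝ) + p⁻¹ ≤ (Real.log c + 2) / p := by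
  have hT_lt : (⌈Real.log c / p⌉₊ : ℝ) < Real.log c / p + 1 :=
    Nat.ceil_lt_add_one (div_nonneg (Real.log_nonneg hc) hp0.le)
  have hp_inv : 1 ≤ p⁻¹ := (one_le_inv₀ hp0).mpr hp1
  rw [add_div, div_eq_mul_inv 2]
  linarith

/-- If `X_0, …, X_n` are ℕ-valued random variables (not necessarily
independent) with geometrically decaying tails `Pr[X_u > t] ≤ (1 − p)^t` for all `t ∈ ℕ`,
where `p ∈ (0, 1]`, then `E[max_u X_u] ≤ (ln(n + 1) + 2)/p`. -/
theorem expected_max_of_geometric_tails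
    {Ω : Type*} [MeasurableSpace Ω] (μ : Measure Ω) [IsProbabilityMeasure μ]
    (n : ℕ) (p : ℝ) (hp0 : 0 < p) (hp1 : p ≤ 1)
    (X : Fin (n + 1) → Ω → ℕ)
    (htail : ∀ u : Fin (n + 1), ∀ t : ℕ,
      μ {ω | t < X u ω} ≤ ENNReal.ofReal ((1 - p) ^ t)) :
    ∫⁻ ω, ((Finset.univ.sup fun u => X u ω : ℕ) : ℝ≥0∞) ∂μ
      ≤ ENNReal.ofReal ((Real.log ((n : ℝ) + 1) + 2) / p) := by
  set q := ENNReal.ofReal (1 - p)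
  set T := ⌈Real.log ((n : ℝ) + 1) / p⌉₊
  have hmax_tail : ∀ t : ℕ, μ {ω | t < Finset.univ.sup fun u => X u ω} ≤ (n + 1) * q ^ t :=
    fun t => calc
      _ ≤ ∑ u, μ {ω | t < X u ω} := measure_lt_finset_sup_le_sum μ _ X t
      _ ≤ ∑ _u : Fin (n + 1), q ^ t := Finset.sum_le_sum fun u _ =>
          (htail u t).trans_eq (ENNReal.ofReal_pow (by linarith) t)
      _ = (n + 1) * q ^ t := by simp
  have hT : (n + 1) * q ^ T ≤ 1 := by
    rw [← ENNReal.ofReal_pow (by linarith), ← Nat.cast_add_one, ← ENNReal.ofReal_natCast,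
      ← ENNReal.ofReal_mul (by positivity), ENNReal.ofReal_le_one, Nat.cast_add_one]
    exact mul_one_sub_pow_natCeil_log_div_le_one hp0 hp1 (by positivity)
  calc ∫⁻ ω, ((Finset.univ.sup fun u => X u ω : ℕ) : ℝ≥0∞) ∂μ
      ≤ ∑' t : ℕ, μ {ω | t < Finset.univ.sup fun u => X u ω} :=
        lintegral_natCast_le_tsum_measure_lt μ _
    _ ≤ T + (1 - q)⁻¹ :=
        ENNReal.tsum_le_add_inv_one_sub_of_le_mul_pow (fun _ => prob_le_one) hmax_tail hT
    _ = ENNReal.ofReal (T + p⁻¹) := by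
        rw [← ENNReal.ofReal_one, ← ENNReal.ofReal_sub _ (by linarith), sub_sub_cancel,
          ← ENNReal.ofReal_inv_of_pos hp0, ENNReal.ofReal_add (by positivity) (by positivity),
          ENNReal.ofReal_natCast]
    _ ≤ ENNReal.ofReal ((Real.log ((n : ℝ) + 1) + 2) / p) :=
        ENNReal.ofReal_le_ofReal (natCeil_log_div_add_inv_le hp0 hp1 (by simp))
end
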